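/- arXiv:2401.03924 — 9 statements merged into one kernel-verified Lean document; each statement's English description precedes it below -/
import Mathlib

section
/- Let p be a natural number and let a = (a_1, ..., a_{2p+2}) be a sequence of integers each lying in the interval [-p, p]. If at least p+1 entries of a are nonnegative and at least p+1 entries are nonpositive, then some nonempty subsequence of a sums to 0. -/
/-!
Discard zero entries (a single one already is a zero-sum subsequence); then there are at least
`p` positive entries and at least `p` negative ones, all of absolute value at most `p`, and it
suffices to find a nonempty set of positive entries and a set of negative entries whose sums
cancel.

Enumerate both, with prefix sums `X i` and `Y j`, and say `X p ≤ Y p`. For each `i ≤ p` let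
`J i` be the largest `j ≤ p` with `Y j ≤ X i`. Since the negative entries have absolute value
at most `p`, the defect `X i - Y (J i)` lies in `[0, p)`, so two of the `p + 1` defects
agree, at `i < k` say. Then the entries `i, …, k - 1` and `J i, …, J k - 1` have the same sum.
-/

open Finset

section PrefixSums

variable {x y : ℕ → ℤ} {n : ℕ}

theorem sum_Ico_pos_of_pos (hx : ∀ t < n, 0 < x t) {i k : ℕ} (hik : i < k) (hk : k ≤ n) :
    0 < ∑ t ∈ Ico i k, x t :=
  sum_pos (fun t ht => hx t (by have := mem_Ico.mp ht; omega)) ⟨i, mem_Ico.mpr ⟨le_rfl, hik⟩⟩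

theorem sum_range_lt_sum_range_of_pos (hx : ∀ t < n, 0 < x t) {i k : ℕ} (hik : i < k)
    (hk : k ≤ n) : ∑ t ∈ range i, x t < ∑ t ∈ range k, x t := by
  have := sum_Ico_pos_of_pos hx hik hk
  rw [sum_Ico_eq_sub _ hik.le] at this
  omega

theorem sum_range_le_sum_range_of_pos (hx : ∀ t < n, 0 < x t) {i k : ℕ} (hik : i ≤ k)
    (hk : k ≤ n) : ∑ t ∈ range i, x t ≤ ∑ t ∈ range k, x t := by
  rcases hik.lt_or_eq with hik | rfl
  · exact (sum_range_lt_sum_range_of_pos hx hik hk).le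
  · exact le_rfl

def greatestPrefixLE (x y : ℕ → ℤ) (n i : ℕ) : ℕ :=
  Nat.findGreatest (fun j => ∑ t ∈ range j, y t ≤ ∑ t ∈ range i, x t) n

theorem greatestPrefixLE_le (i : ℕ) : greatestPrefixLE x y n i ≤ n :=
  Nat.findGreatest_le n

theorem sum_range_greatestPrefixLE_le {i : ℕ} (hi : 0 ≤ ∑ t ∈ range i, x t) :
    ∑ t ∈ range (greatestPrefixLE x y n i), y t ≤ ∑ t ∈ range i, x t :=
  Nat.findGreatest_spec (P := fun j => ∑ t ∈ range j, y t ≤ ∑ t ∈ range i, x t)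
    (Nat.zero_le n) (by simpa using hi)

theorem sum_range_sub_sum_range_greatestPrefixLE_lt {p : ℕ} (hp : 0 < p)
    (hy : ∀ t < n, y t ≤ p) {i : ℕ} (hin : ∑ t ∈ range i, x t ≤ ∑ t ∈ range n, y t) :
    ∑ t ∈ range i, x t - ∑ t ∈ range (greatestPrefixLE x y n i), y t < p := by
  set j := greatestPrefixLE x y n i
  rcases (greatestPrefixLE_le i : j ≤ n).lt_or_eq with hj | hj
  · have hnext : ¬ ∑ t ∈ range (j + 1), y t ≤ ∑ t ∈ range i, x t :=
      Nat.findGreatest_is_greatest (Nat.lt_succ_self j) hj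
    rw [sum_range_succ] at hnext
    have := hy j hj
    omega
  · rw [show j = n from hj]
    omega

theorem exists_sum_Ico_eq_of_sum_range_le {p : ℕ} (hp : 0 < p) (hpn : p ≤ n)
    (hx : ∀ t < n, 0 < x t) (hy : ∀ t < n, 0 < y t) (hyp : ∀ t < n, y t ≤ p)
    (hxy : ∑ t ∈ range n, x t ≤ ∑ t ∈ range n, y t) :
    ∃ i k j l, i < k ∧ k ≤ n ∧ j < l ∧ l ≤ n ∧
      ∑ t ∈ Ico i k, x t = ∑ t ∈ Ico j l, y t := by
  have hdefect : ∀ i ∈ range (n + 1),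
      ∑ t ∈ range i, x t - ∑ t ∈ range (greatestPrefixLE x y n i), y t ∈ Ico (0 : ℤ) p := by
    intro i hi
    have hin : i ≤ n := Nat.lt_succ_iff.mp (mem_range.mp hi)
    have hX0 : 0 ≤ ∑ t ∈ range i, x t := by
      simpa using sum_range_le_sum_range_of_pos hx (Nat.zero_le i) hin
    have hXn := (sum_range_le_sum_range_of_pos hx hin le_rfl).trans hxy
    have h₁ := sum_range_greatestPrefixLE_le (y := y) (n := n) hX0
    have h₂ := sum_range_sub_sum_range_greatestPrefixLE_lt hp hyp hXn
    exact mem_Ico.mpr ⟨by omega, h₂⟩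
  obtain ⟨i, hi, k, hk, hne, heq⟩ :=
    exists_ne_map_eq_of_card_lt_of_maps_to (by simp; omega) hdefect
  wlog hik : i < k generalizing i k
  · exact this k hk i hi hne.symm heq.symm (by omega)
  have hkn : k ≤ n := Nat.lt_succ_iff.mp (mem_range.mp hk)
  have hXik := sum_range_lt_sum_range_of_pos hx hik hkn
  have hJik : greatestPrefixLE x y n i < greatestPrefixLE x y n k := by
    by_contra! hJ
    have := sum_range_le_sum_range_of_pos hy hJ (greatestPrefixLE_le i)
    omega
  refine ⟨i, k, _, _, hik, hkn, hJik, greatestPrefixLE_le k, ?_⟩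
  rw [sum_Ico_eq_sub _ hik.le, sum_Ico_eq_sub _ hJik.le]
  omega

theorem exists_sum_Ico_eq {p : ℕ} (hp : 0 < p) (hpn : p ≤ n)
    (hx : ∀ t < n, 0 < x t ∧ x t ≤ p) (hy : ∀ t < n, 0 < y t ∧ y t ≤ p) :
    ∃ i k j l, i < k ∧ k ≤ n ∧ j < l ∧ l ≤ n ∧
      ∑ t ∈ Ico i k, x t = ∑ t ∈ Ico j l, y t := by
  rcases le_total (∑ t ∈ range n, x t) (∑ t ∈ range n, y t) with hxy | hyx
  · exact exists_sum_Ico_eq_of_sum_range_le hp hpn (fun t ht => (hx t ht).1)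
      (fun t ht => (hy t ht).1) (fun t ht => (hy t ht).2) hxy
  · obtain ⟨i, k, j, l, hik, hkn, hjl, hln, h⟩ := exists_sum_Ico_eq_of_sum_range_le hp hpn
      (fun t ht => (hy t ht).1) (fun t ht => (hx t ht).1) (fun t ht => (hx t ht).2) hyx
    exact ⟨j, l, i, k, hjl, hln, hik, hkn, h.symm⟩

end PrefixSums

theorem Finset.exists_injOn_mapsTo_range {ι : Type*} [Nonempty ι] {s : Finset ι} {n : ℕ}
    (hn : n ≤ #s) : ∃ e : ℕ → ι, Set.InjOn e (range n) ∧ Set.MapsTo e (range n) s := by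
  let emb : Fin n ↪ s := (Fin.castLEEmb hn).trans s.equivFin.symm.toEmbedding
  refine ⟨fun t => if h : t < n then emb ⟨t, h⟩ else Classical.arbitrary ι, ?_, ?_⟩
  · intro t ht u hu htu
    have ht' := mem_range.mp ht
    have hu' := mem_range.mp hu
    simp only [ht', hu', dif_pos] at htu
    exact Fin.mk.inj_iff.mp (emb.injective (Subtype.ext htu))
  · intro t ht
    simp [mem_range.mp (mem_coe.mp ht)]

theorem exists_sum_eq_sum_of_le_card {ι : Type*} [DecidableEq ι] {P N : Finset ι} {f g : ι → ℤ} {p : ℕ}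
    (hp : 0 < p) (hP : p ≤ #P) (hN : p ≤ #N)
    (hf : ∀ i ∈ P, 0 < f i ∧ f i ≤ p) (hg : ∀ i ∈ N, 0 < g i ∧ g i ≤ p) :
    ∃ S ⊆ P, S.Nonempty ∧ ∃ T ⊆ N, T.Nonempty ∧ ∑ i ∈ S, f i = ∑ i ∈ T, g i := by
  obtain ⟨i₀, -⟩ := card_pos.mp (hp.trans_le hP)
  have : Nonempty ι := ⟨i₀⟩
  obtain ⟨e, he_inj, he_maps⟩ := exists_injOn_mapsTo_range hP
  obtain ⟨e', he'_inj, he'_maps⟩ := exists_injOn_mapsTo_range hN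
  obtain ⟨i, k, j, l, hik, hkp, hjl, hlp, hsum⟩ := exists_sum_Ico_eq (x := f ∘ e) (y := g ∘ e')
    hp le_rfl (fun t ht => hf _ (he_maps (mem_range.mpr ht)))
    (fun t ht => hg _ (he'_maps (mem_range.mpr ht)))
  have hIco : ∀ {a b}, b ≤ p → Ico a b ⊆ range p := fun hb t ht =>
    mem_range.mpr (by have := mem_Ico.mp ht; omega)
  refine ⟨(Ico i k).image e, ?_, (nonempty_Ico.mpr hik).image e,
    (Ico j l).image e', ?_, (nonempty_Ico.mpr hjl).image e', ?_⟩
  · exact image_subset_iff.mpr fun t ht => he_maps (hIco hkp ht)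
  · exact image_subset_iff.mpr fun t ht => he'_maps (hIco hlp ht)
  · rw [sum_image (he_inj.mono (coe_subset.mpr (hIco hkp))),
      sum_image (he'_inj.mono (coe_subset.mpr (hIco hlp)))]
    exact hsum

/-- zero-sum subsequence lemma. -/
theorem stmt_0 (p : ℕ) (a : Fin (2 * p + 2) → ℤ)
    (hrange : ∀ i, -(p : ℤ) ≤ a i ∧ a i ≤ (p : ℤ))
    (hnonneg : (p : ℕ) + 1 ≤ (Finset.univ.filter (fun i => 0 ≤ a i)).card)
    (hnonpos : (p : ℕ) + 1 ≤ (Finset.univ.filter (fun i => a i ≤ 0)).card) :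
    ∃ s : Finset (Fin (2 * p + 2)), s.Nonempty ∧ ∑ i ∈ s, a i = 0 := by
  by_cases hzero : ∃ i, a i = 0
  · obtain ⟨i, hi⟩ := hzero
    exact ⟨{i}, singleton_nonempty i, by simp [hi]⟩
  push Not at hzero
  have hp : 0 < p := by
    by_contra! hp
    have := hrange 0
    exact hzero 0 (by omega)
  have hpos : univ.filter (fun i => 0 ≤ a i) = univ.filter (fun i => 0 < a i) :=
    filter_congr fun i _ => by have := hzero i; omega
  have hneg : univ.filter (fun i => a i ≤ 0) = univ.filter (fun i => a i < 0) :=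
    filter_congr fun i _ => by have := hzero i; omega
  obtain ⟨S, hSpos, hS, T, hTneg, -, hST⟩ :=
    exists_sum_eq_sum_of_le_card (P := univ.filter (fun i => 0 < a i))
      (N := univ.filter (fun i => a i < 0)) (f := a) (g := fun i => -a i) hp
      (by rw [← hpos]; omega) (by rw [← hneg]; omega)
      (fun i hi => ⟨(mem_filter.mp hi).2, (hrange i).2⟩)
      (fun i hi => ⟨by linarith [(mem_filter.mp hi).2], by linarith [(hrange i).1]⟩)
  have hdisj : Disjoint S T := disjoint_left.mpr fun i hiS hiT => by
    have := (mem_filter.mp (hSpos hiS)).2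
    have := (mem_filter.mp (hTneg hiT)).2
    omega
  refine ⟨S ∪ T, hS.mono subset_union_left, ?_⟩
  rw [sum_union hdisj, hST, sum_neg_distrib, neg_add_cancel]
end

section
/- Every complete r-partite graph has the path-shortening property Pshort(3): for every perfect matching M and every M-alternating path P, if {a_1,b_1}, {a_2,b_2}, {a_3,b_3} are three matching edges of P whose endpoints appear in the order a_1,b_1,a_2,b_2,a_3,b_3 along P, then G contains an edge {a_i, b_j} for some 1 ≤ i < j ≤ 3, or G contains both edges {a_{i1}, a_{i3}} and {b_{i2}, b_{i4}} for some 1 ≤ i1 < i2 < i3 < i4 ≤ 3 (the latter case being vacuous for t = 3). -/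
variable {V : Type*} [Fintype V] [DecidableEq V]

/-- `M` is a perfect matching of `G`: every edge of `M` is an edge of `G`,
and every vertex lies in exactly one edge of `M`. -/
def IsPM (G : SimpleGraph V) (M : Finset (Sym2 V)) : Prop :=
  (∀ e ∈ M, e ∈ G.edgeSet) ∧ ∀ v : V, ∃! e, e ∈ M ∧ v ∈ e

/-- The `M`-induced weight of an edge, for the coloring `c` (`true` = red):
`-1` for red matching edges, `+1` for red non-matching edges, `0` for blue edges. -/
def wt (c : Sym2 V → Bool) (M : Finset (Sym2 V)) (e : Sym2 V) : ℤ :=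
  if c e then (if e ∈ M then -1 else 1) else 0

/-- Number of red edges of a finite edge set. -/
def redCount (c : Sym2 V → Bool) (F : Finset (Sym2 V)) : ℕ :=
  (F.filter (fun e => c e = true)).card

/-- A walk is `M`-alternating if consecutive edges have opposite membership in `M`. -/
def IsAlt (M : Finset (Sym2 V)) {G : SimpleGraph V} {u v : V} (P : G.Walk u v) : Prop :=
  P.edges.Chain' (fun e f => (e ∈ M) ↔ f ∉ M)

/-- The path-shortening property `Pshort(t)`: for every perfect matching `M`, every
`M`-alternating path `P`, and every family of `t` matching edges `{a i, b i}` of `P`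
whose endpoints appear along `P` in the order `a 1, b 1, …, a t, b t`, either
`G` has an edge `{a i, b j}` with `i < j`, or `G` has both edges `{a i1, a i3}` and
`{b i2, b i4}` for some `i1 < i2 < i3 < i4`. -/
def Pshort (G : SimpleGraph V) (t : ℕ) : Prop :=
  ∀ (M : Finset (Sym2 V)), IsPM G M →
    ∀ (u v : V) (P : G.Walk u v), P.IsPath → IsAlt M P →
      ∀ a b : Fin t → V,
        (∀ i, s(a i, b i) ∈ M ∧ s(a i, b i) ∈ P.edges) →
        List.Sublist ((List.finRange t).flatMap (fun i => [a i, b i])) P.support →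
        (∃ i j, i < j ∧ G.Adj (a i) (b j)) ∨
        (∃ i1 i2 i3 i4 : Fin t, i1 < i2 ∧ i2 < i3 ∧ i3 < i4 ∧
          G.Adj (a i1) (a i3) ∧ G.Adj (b i2) (b i4))

/-!
In a complete multipartite graph non-adjacency is transitive, so if none of `a₁b₂, a₁b₃, a₂b₃`
were edges, the chain `a₂ ≁ b₃ ≁ a₁ ≁ b₂` would force `a₂ ≁ b₂`, contradicting that the
matching edge `{a₂, b₂}` is an edge of `G`.
-/

namespace SimpleGraph

variable {α ι : Type*} {G : SimpleGraph α}

lemma isCompleteMultipartite_of_adj_iff_ne (part : α → ι)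
    (hpart : ∀ u w, G.Adj u w ↔ part u ≠ part w) : G.IsCompleteMultipartite where
  trans u v w huv hvw := by
    simp only [hpart, not_not] at huv hvw ⊢
    exact huv.trans hvw

lemma IsCompleteMultipartite.adj_or_adj_or_adj (hG : G.IsCompleteMultipartite)
    {a₁ a₂ b₂ b₃ : α} (h : G.Adj a₂ b₂) : G.Adj a₁ b₂ ∨ G.Adj a₁ b₃ ∨ G.Adj a₂ b₃ := by
  by_contra! ⟨h₁₂, h₁₃, h₂₃⟩
  have h₃₁ : ¬G.Adj b₃ a₁ := fun h' => h₁₃ h'.symm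
  exact hG.trans _ _ _ (hG.trans _ _ _ h₂₃ h₃₁) h₁₂ h

lemma IsCompleteMultipartite.pshort_three (hG : G.IsCompleteMultipartite) : Pshort G 3 := by
  intro M hM _ _ _ _ _ a b hab _
  left
  have hmatch : G.Adj (a 1) (b 1) := hM.1 _ (hab 1).1
  rcases hG.adj_or_adj_or_adj (a₁ := a 0) (b₃ := b 2) hmatch with h | h | h
  exacts [⟨0, 1, by decide, h⟩, ⟨0, 2, by decide, h⟩, ⟨1, 2, by decide, h⟩]

end SimpleGraph

/-- every complete `r`-partite graph has the path-shortening
property `Pshort(3)`. -/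
theorem stmt_3 (G : SimpleGraph V) (r : ℕ) (part : V → Fin r)
    (hpart : ∀ u w : V, G.Adj u w ↔ part u ≠ part w) :
    Pshort G 3 :=
  (SimpleGraph.isCompleteMultipartite_of_adj_iff_ne part hpart).pshort_three
end

section
/- Every graph of neighborhood diversity at most d has the path-shortening property Pshort(d+1): given a perfect matching M, an M-alternating path P, and d+1 matching edges {a_1,b_1},...,{a_{d+1},b_{d+1}} of P whose vertices appear in this order along P, there exist indices i < j such that {a_i, b_j} is an edge of G. -/
variable {V : Type*} [Fintype V] [DecidableEq V]

/-!
Pigeonhole on the `d` types gives `i < j` with `b i` and `b j` of the same type. The path visits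
each vertex once, so the matching partner `a i` of `b i` differs from `b j`, and same type then
makes `a i` a neighbour of `b j`.
-/

theorem List.Nodup.flatMap_pair_ne {α : Type*} {n : ℕ} {a b : Fin n → α}
    (h : ((List.finRange n).flatMap fun i => [a i, b i]).Nodup) {i j : Fin n} (hij : i < j) :
    a i ≠ b j := by
  rw [← List.ofFn_id, List.nodup_flatMap, List.pairwise_ofFn] at h
  have hdisj := h.2 hij
  simp only [Function.onFun, id, List.disjoint_cons_left, List.mem_cons] at hdisj
  tauto

namespace SimpleGraph

variable {α : Type*} {G : SimpleGraph α}

theorem Adj.of_neighborSet_sdiff_eq {x u w : α}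
    (htype : G.neighborSet u \ {w} = G.neighborSet w \ {u}) (hxu : G.Adj x u) (hxw : x ≠ w) :
    G.Adj x w := by
  have hx : x ∈ G.neighborSet w \ {u} := htype ▸ ⟨hxu.symm, hxw⟩
  exact hx.1.symm

theorem exists_lt_adj_of_neighborSet_types {ι : Type*} [LinearOrder ι] [Fintype ι] {d : ℕ}
    (hcard : d < Fintype.card ι) (part : α → Fin d)
    (hpart : ∀ u w : α, part u = part w → G.neighborSet u \ {w} = G.neighborSet w \ {u})
    {a b : ι → α} (hadj : ∀ i, G.Adj (a i) (b i)) (hne : ∀ i j, i < j → a i ≠ b j) :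
    ∃ i j, i < j ∧ G.Adj (a i) (b j) := by
  obtain ⟨i, j, hij, hpb⟩ :=
    Fintype.exists_ne_map_eq_of_card_lt (part ∘ b) (by simpa using hcard)
  have adj_of_lt {i j : ι} (h : i < j) (hp : part (b i) = part (b j)) : G.Adj (a i) (b j) :=
    (hadj i).of_neighborSet_sdiff_eq (hpart _ _ hp) (hne i j h)
  rcases hij.lt_or_gt with h | h
  · exact ⟨i, j, h, adj_of_lt h hpb⟩
  · exact ⟨j, i, h, adj_of_lt h hpb.symm⟩

end SimpleGraph

theorem stmt_4_general (G : SimpleGraph V) (d : ℕ) (part : V → Fin d)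
    (hpart : ∀ u w : V, part u = part w → G.neighborSet u \ {w} = G.neighborSet w \ {u})
    (M : Finset (Sym2 V))
    (u v : V) (P : G.Walk u v) (hP : P.IsPath)
    (a b : Fin (d + 1) → V)
    (hmatch : ∀ i, s(a i, b i) ∈ M ∧ s(a i, b i) ∈ P.edges)
    (horder : List.Sublist ((List.finRange (d + 1)).flatMap (fun i => [a i, b i])) P.support) :
    ∃ i j : Fin (d + 1), i < j ∧ G.Adj (a i) (b j) := by
  have hnodup := hP.support_nodup.sublist horder
  exact G.exists_lt_adj_of_neighborSet_types (by simp) part hpart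
    (fun i => P.adj_of_mem_edges (hmatch i).2) (fun _ _ => hnodup.flatMap_pair_ne)

/-- a graph of neighborhood diversity at most `d` has `Pshort(d+1)`,
in the strong form: among any `d+1` ordered matching edges of an alternating path
there are indices `i < j` with `{a i, b j}` an edge. -/
theorem stmt_4 (G : SimpleGraph V) (d : ℕ) (part : V → Fin d)
    (hpart : ∀ u w : V, part u = part w → G.neighborSet u \ {w} = G.neighborSet w \ {u})
    (M : Finset (Sym2 V)) (hM : IsPM G M)
    (u v : V) (P : G.Walk u v) (hP : P.IsPath) (halt : IsAlt M P)
    (a b : Fin (d + 1) → V)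
    (hmatch : ∀ i, s(a i, b i) ∈ M ∧ s(a i, b i) ∈ P.edges)
    (horder : List.Sublist ((List.finRange (d + 1)).flatMap (fun i => [a i, b i])) P.support) :
    ∃ i j : Fin (d + 1), i < j ∧ G.Adj (a i) (b j) :=
  stmt_4_general G d part hpart M u v P hP a b hmatch horder
end

section
/- Every bipartite graph with bipartite independence number at most β has the path-shortening property Pshort(2β+2): for every perfect matching M, every M-alternating path P, and every choice of 2β+2 matching edges {a_1,b_1},...,{a_{2β+2},b_{2β+2}} of P whose vertices appear in this order along P, there exist indices i < j with {a_i, b_j} an edge of G. -/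
/-!
On an `M`-alternating path the matching edges sit at positions of one parity, and in a
bipartite graph the side of the `k`-th vertex of a path is determined by the parity of `k`.
Since each `a i` precedes `b i` on the path, all `a i` lie on one side and all `b i` on the
other. The vertices `a 0, …, a β` and `b (β+1), …, b (2β+1)` are then two sets of `β + 1`
vertices on opposite sides, so some edge joins them.
-/

variable {V : Type*} [Fintype V] [DecidableEq V]

namespace List

theorem IsChain.getElem_iff_getElem_iff_mod_two {α : Type*} {p : α → Prop} {l : List α}
    (hl : l.IsChain fun x y => p x ↔ ¬ p y) {i j : ℕ} (hi : i < l.length) (hj : j < l.length) :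
    (p l[i] ↔ p l[j]) ↔ i % 2 = j % 2 := by
  have from_head : ∀ k (hk : k < l.length), (p l[k] ↔ p l[0]) ↔ k % 2 = 0 := by
    intro k hk
    induction k with
    | zero => simp
    | succ k ih =>
      have hstep := isChain_iff_getElem.mp hl k hk
      have := ih (by omega)
      have : (k + 1) % 2 = 0 ↔ ¬ k % 2 = 0 := by omega
      tauto
  have := from_head i hi
  have := from_head j hj
  have : i % 2 = j % 2 ↔ (i % 2 = 0 ↔ j % 2 = 0) := by omega
  tauto

theorem Nodup.eq_of_pair_sublist_of_pair_sublist {α : Type*} {l : List α} (hl : l.Nodup)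
    {x y : α} (hxy : [x, y] <+ l) (hyx : [y, x] <+ l) : x = y :=
  (cons.inj ((hl.perm_iff_eq_of_sublist hxy hyx).mp (Perm.swap y x []))).1

theorem pair_sublist_flatMap {ι α : Type*} {l : List ι} {i : ι} (hi : i ∈ l) (f g : ι → α) :
    [f i, g i] <+ l.flatMap fun i => [f i, g i] :=
  sublist_flatten_of_mem (mem_map_of_mem hi)

theorem injective_of_nodup_flatMap_pair {ι α : Type*} {l : List ι} (hl : ∀ i, i ∈ l)
    {f g : ι → α} (h : (l.flatMap fun i => [f i, g i]).Nodup) :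
    Function.Injective f ∧ Function.Injective g := by
  have : Std.Symm (Function.onFun Disjoint fun i => [f i, g i]) := ⟨fun _ _ h => h.symm⟩
  have hdisj := (nodup_flatMap.mp h).2.forall
  constructor <;> intro i j hij <;> by_contra hne
  · exact hdisj (hl i) (hl j) hne (show f i ∈ [f i, g i] by simp) (by simp [hij])
  · exact hdisj (hl i) (hl j) hne (show g i ∈ [f i, g i] by simp) (by simp [hij])

end List

namespace SimpleGraph.Walk

open List

variable {W : Type*} {G : SimpleGraph W} {x y u v : W} {P : G.Walk u v}

theorem IsPath.mk_mem_darts_of_pair_sublist (hP : P.IsPath) (h : G.Adj x y)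
    (he : s(x, y) ∈ P.edges) (hxy : [x, y] <+ P.support) : (⟨(x, y), h⟩ : G.Dart) ∈ P.darts := by
  obtain ⟨d, hd, hde⟩ := mem_map.mp he
  rcases (dart_edge_eq_iff d ⟨(x, y), h⟩).mp hde with rfl | rfl
  · exact hd
  · have hyx : [y, x] <+ P.support := (mem_darts_iff_fst_snd_infix_support.mp hd).sublist
    exact absurd (hP.support_nodup.eq_of_pair_sublist_of_pair_sublist hxy hyx) h.ne

end SimpleGraph.Walk

theorem IsAlt.side_fst_eq {W : Type*} {G : SimpleGraph W} {M : Finset (Sym2 W)} {u v : W}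
    {P : G.Walk u v} (side : W → Bool) (hbip : ∀ u w : W, G.Adj u w → side u ≠ side w)
    (halt : IsAlt M P) {d d' : G.Dart} (hd : d ∈ P.darts) (hd' : d' ∈ P.darts)
    (hdM : d.edge ∈ M) (hdM' : d'.edge ∈ M) :
    side d.fst = side d'.fst := by
  obtain ⟨k, hk, rfl⟩ := List.getElem_of_mem hd
  obtain ⟨k', hk', rfl⟩ := List.getElem_of_mem hd'
  have hparity : k % 2 = k' % 2 := by
    rw [SimpleGraph.Walk.edge_getElem_darts] at hdM hdM'
    exact (List.IsChain.getElem_iff_getElem_iff_mod_two halt _ _).mp (iff_of_true hdM hdM')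
  have hside : P.support.IsChain fun x y => side x = true ↔ ¬ side y = true :=
    P.isChain_adj_support.imp fun x y h => by
      have := hbip x y h
      revert this
      cases side x <;> cases side y <;> simp
  simp only [SimpleGraph.Walk.fst_darts_getElem, List.getElem_dropLast]
  exact Bool.eq_iff_iff.mpr ((hside.getElem_iff_getElem_iff_mod_two _ _).mpr hparity)

section BipartiteIndependence

variable {W : Type*}

def BipartiteIndepNumberLE (G : SimpleGraph W) (side : W → Bool) (β : ℕ) : Prop :=
  ¬ ∃ A' B' : Finset W, (∀ x ∈ A', side x = true) ∧ (∀ y ∈ B', side y = false) ∧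
    A'.card = β + 1 ∧ B'.card = β + 1 ∧ ∀ x ∈ A', ∀ y ∈ B', ¬ G.Adj x y

variable {G : SimpleGraph W} {side : W → Bool} {β : ℕ}

theorem BipartiteIndepNumberLE.exists_adj (hind : BipartiteIndepNumberLE G side β)
    {X Y : Finset W} (c : Bool) (hX : ∀ x ∈ X, side x = c) (hY : ∀ y ∈ Y, side y = !c)
    (hXcard : X.card = β + 1) (hYcard : Y.card = β + 1) : ∃ x ∈ X, ∃ y ∈ Y, G.Adj x y := by
  by_contra! h
  cases c
  · exact hind ⟨Y, X, hY, hX, hYcard, hXcard, fun y hy x hx hyx => h x hx y hy hyx.symm⟩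
  · exact hind ⟨X, Y, hX, hY, hXcard, hYcard, h⟩

theorem BipartiteIndepNumberLE.exists_lt_adj (hind : BipartiteIndepNumberLE G side β)
    {a b : Fin (2 * β + 2) → W} (ha : Function.Injective a) (hb : Function.Injective b)
    (c : Bool) (hsa : ∀ i, side (a i) = c) (hsb : ∀ i, side (b i) = !c) :
    ∃ i j, i < j ∧ G.Adj (a i) (b j) := by
  let low : Fin (β + 1) ↪ Fin (2 * β + 2) := Fin.castLEEmb (by omega)
  let high : Fin (β + 1) ↪ Fin (2 * β + 2) :=
    ⟨fun t => ⟨β + 1 + t, by omega⟩, fun s t h => Fin.ext (by simpa using h)⟩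
  obtain ⟨x, hx, y, hy, hxy⟩ := hind.exists_adj c
    (X := Finset.univ.map (low.trans ⟨a, ha⟩)) (Y := Finset.univ.map (high.trans ⟨b, hb⟩))
    (by simp [hsa]) (by simp [hsb]) (by simp) (by simp)
  simp only [Finset.mem_map, Finset.mem_univ, true_and] at hx hy
  obtain ⟨s, rfl⟩ := hx
  obtain ⟨t, rfl⟩ := hy
  exact ⟨low s, high t, Fin.lt_def.mpr (show (s : ℕ) < β + 1 + t by omega), hxy⟩

end BipartiteIndependence

theorem stmt_5_general (G : SimpleGraph V) (β : ℕ) (side : V → Bool)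
    (hbip : ∀ u w : V, G.Adj u w → side u ≠ side w)
    (hind : ¬ ∃ A' B' : Finset V, (∀ x ∈ A', side x = true) ∧ (∀ y ∈ B', side y = false) ∧
      A'.card = β + 1 ∧ B'.card = β + 1 ∧ ∀ x ∈ A', ∀ y ∈ B', ¬ G.Adj x y)
    (M : Finset (Sym2 V))
    (u v : V) (P : G.Walk u v) (hP : P.IsPath) (halt : IsAlt M P)
    (a b : Fin (2 * β + 2) → V)
    (hmatch : ∀ i, s(a i, b i) ∈ M ∧ s(a i, b i) ∈ P.edges)
    (horder : List.Sublist ((List.finRange (2 * β + 2)).flatMap (fun i => [a i, b i])) P.support) :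
    ∃ i j : Fin (2 * β + 2), i < j ∧ G.Adj (a i) (b j) := by
  obtain ⟨ha, hb⟩ :=
    List.injective_of_nodup_flatMap_pair List.mem_finRange (horder.nodup hP.support_nodup)
  have hadj : ∀ i, G.Adj (a i) (b i) := fun i => P.adj_of_mem_edges (hmatch i).2
  have hdart : ∀ i, (⟨(a i, b i), hadj i⟩ : G.Dart) ∈ P.darts := fun i =>
    hP.mk_mem_darts_of_pair_sublist (hadj i) (hmatch i).2
      ((List.pair_sublist_flatMap (List.mem_finRange i) a b).trans horder)
  have hsa : ∀ i, side (a i) = side (a 0) := fun i =>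
    halt.side_fst_eq side hbip (hdart i) (hdart 0) (hmatch i).1 (hmatch 0).1
  have hsb : ∀ i, side (b i) = !side (a 0) := fun i =>
    hsa i ▸ Bool.eq_not_of_ne (hbip _ _ (hadj i)).symm
  exact BipartiteIndepNumberLE.exists_lt_adj hind ha hb _ hsa hsb

/-- a bipartite graph with bipartite independence number at most `β`
has `Pshort(2β+2)`, in the strong form with the first disjunct only. -/
theorem stmt_5 (G : SimpleGraph V) (β : ℕ) (side : V → Bool)
    (hbip : ∀ u w : V, G.Adj u w → side u ≠ side w)
    (hind : ¬ ∃ A' B' : Finset V, (∀ x ∈ A', side x = true) ∧ (∀ y ∈ B', side y = false) ∧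
      A'.card = β + 1 ∧ B'.card = β + 1 ∧ ∀ x ∈ A', ∀ y ∈ B', ¬ G.Adj x y)
    (M : Finset (Sym2 V)) (hM : IsPM G M)
    (u v : V) (P : G.Walk u v) (hP : P.IsPath) (halt : IsAlt M P)
    (a b : Fin (2 * β + 2) → V)
    (hmatch : ∀ i, s(a i, b i) ∈ M ∧ s(a i, b i) ∈ P.edges)
    (horder : List.Sublist ((List.finRange (2 * β + 2)).flatMap (fun i => [a i, b i])) P.support) :
    ∃ i j : Fin (2 * β + 2), i < j ∧ G.Adj (a i) (b j) :=
  stmt_5_general G β side hbip hind M u v P hP halt a b hmatch horder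
end

section
/- Let (G,c) be a red-blue edge-colored graph with perfect matching M, and let P be an M-alternating path with weight w_M(P) ≤ -2t for an integer t ≥ 2. Then P contains a subpath P' with an even number of edges such that w_M(P') ≤ 0 and P' has at least t red edges (i.e., P contains a t-good path). -/
variable {V : Type*} [Fintype V] [DecidableEq V]

/- Dropping the first edge of an odd path raises the weight by at most `1`, giving an even
subpath of weight at most `1 - 2t ≤ 0`. Each edge has weight at least `-1`, and only red edges
have negative weight, so the number of red edges is at least minus the weight, i.e. `2t - 1 ≥ t`. -/

theorem List.exists_even_infix_sum_map_le {α : Type*} (f : α → ℤ) (hf : ∀ x, -1 ≤ f x) :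
    ∀ l : List α, ∃ l', l' <:+: l ∧ Even l'.length ∧ (l'.map f).sum ≤ (l.map f).sum + 1
  | [] => ⟨[], List.infix_refl _, ⟨0, rfl⟩, by simp⟩
  | a :: l => by
    by_cases hl : Even (a :: l).length
    · exact ⟨a :: l, List.infix_refl _, hl, by omega⟩
    · refine ⟨l, (List.suffix_cons a l).isInfix, ?_, ?_⟩
      · simpa [Nat.even_add_one] using hl
      · simp only [List.map_cons, List.sum_cons]
        linarith [hf a]

lemma neg_one_le_wt {α : Type*} [DecidableEq α] (c : Sym2 α → Bool) (M : Finset (Sym2 α))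
    (e : Sym2 α) : -1 ≤ wt c M e := by
  unfold wt; split_ifs <;> omega

lemma neg_sum_map_wt_le_countP {α : Type*} [DecidableEq α] (c : Sym2 α → Bool)
    (M : Finset (Sym2 α)) (l : List (Sym2 α)) :
    -(l.map (wt c M)).sum ≤ l.countP (fun e => c e) := by
  induction l with
  | nil => simp
  | cons e l ih =>
    simp only [List.map_cons, List.sum_cons, List.countP_cons, wt]
    split_ifs <;> push_cast <;> omega

theorem stmt_7_general (G : SimpleGraph V) (c : Sym2 V → Bool) (M : Finset (Sym2 V))
    {u v : V} (P : G.Walk u v)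
    (t : ℕ) (ht : 2 ≤ t)
    (hw : (P.edges.map (wt c M)).sum ≤ -2 * (t : ℤ)) :
    ∃ l : List (Sym2 V), l <:+: P.edges ∧ Even l.length ∧
      (l.map (wt c M)).sum ≤ 0 ∧ t ≤ l.countP (fun e => c e) := by
  obtain ⟨l, hl, heven, hsum⟩ :=
    List.exists_even_infix_sum_map_le (wt c M) (neg_one_le_wt c M) P.edges
  have hred := neg_sum_map_wt_le_countP c M l
  exact ⟨l, hl, heven, by omega, by omega⟩

/-- an `M`-alternating path of weight at most `-2t` (with `t ≥ 2`)
contains a `t`-good contiguous subpath: even number of edges, weight at most `0`,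
and at least `t` red edges. -/
theorem stmt_7 (G : SimpleGraph V) (c : Sym2 V → Bool) (M : Finset (Sym2 V))
    (hM : IsPM G M) {u v : V} (P : G.Walk u v) (hP : P.IsPath) (halt : IsAlt M P)
    (t : ℕ) (ht : 2 ≤ t)
    (hw : (P.edges.map (wt c M)).sum ≤ -2 * (t : ℤ)) :
    ∃ l : List (Sym2 V), l <:+: P.edges ∧ Even l.length ∧
      (l.map (wt c M)).sum ≤ 0 ∧ t ≤ l.countP (fun e => c e) :=
  stmt_7_general G c M P t ht hw
end

section
/- Let (G,c) be a red-blue edge-colored graph with perfect matching M, let t ≥ 2 and x ≥ 0 be integers, and let P be an M-alternating path with |w_M(P)| ≤ x and at least 8t² + 4tx red edges. Then P contains a t-good subpath, i.e., a contiguous subpath P' with an even number of edges, w_M(P') ≤ 0, and at least t red edges. -/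
variable {V : Type*} [Fintype V] [DecidableEq V]

/-!
Cut the path greedily into consecutive even-length pieces, each as short as possible subject to
containing at least `t` red edges; each piece then has at most `t + 1` red edges. If no subpath
were `t`-good, every piece would have positive weight, so the total weight would grow by at least
one for every `t + 1` red edges, while the leftover piece, with at most `t` red edges, costs at
most `t`. Hence more than `(t + 1)x + t(t + 2)` red edges force the weight above `x`.
-/

section GoodSegments

variable {α : Type*}

/-- `t`-goodness for the weight `f`, with `p` marking the red elements. -/
def IsGood (f : α → ℤ) (p : α → Bool) (t : ℕ) (l : List α) : Prop :=
  Even l.length ∧ (l.map f).sum ≤ 0 ∧ t ≤ l.countP p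

variable {f : α → ℤ} {p : α → Bool} {t : ℕ}

lemma neg_countP_le_sum_map (hf : ∀ a, -1 ≤ f a) (hp : ∀ a, f a ≠ 0 → p a) (l : List α) :
    -(l.countP p : ℤ) ≤ (l.map f).sum := by
  induction l with
  | nil => simp
  | cons a l ih =>
    by_cases ha : p a
    · simp only [List.countP_cons, ha, List.map_cons, List.sum_cons]
      push_cast
      linarith [hf a]
    · have : f a = 0 := by_contra fun h => ha (hp a h)
      simpa [List.countP_cons, ha, this] using ih

lemma countP_take_add_le (p : α → Bool) (l : List α) (m n : ℕ) :
    (l.take (m + n)).countP p ≤ (l.take m).countP p + n := by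
  rw [List.take_add, List.countP_append]
  have := (List.countP_le_length (p := p) (l := (l.drop m).take n)).trans
    (List.length_take_le _ _)
  omega

/-- The prefix counts grow by at most two per step, so they cannot jump over `[t, t + 1]`. -/
lemma exists_le_countP_take_two_mul_le_succ (l : List α) :
    ∀ k, t ≤ (l.take (2 * k)).countP p →
      ∃ j ≤ k, t ≤ (l.take (2 * j)).countP p ∧ (l.take (2 * j)).countP p ≤ t + 1
  | 0, h => ⟨0, le_rfl, h, by simp⟩
  | k + 1, h => by
    by_cases hk : t ≤ (l.take (2 * k)).countP p
    · obtain ⟨j, hj, hjt⟩ := exists_le_countP_take_two_mul_le_succ l k hk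
      exact ⟨j, hj.trans k.le_succ, hjt⟩
    · have := countP_take_add_le p l (2 * k) 2
      exact ⟨k + 1, le_rfl, h, by rw [Nat.mul_succ]; omega⟩

lemma countP_le_of_forall_take_two_mul_lt (l : List α)
    (h : ∀ k, 2 * k ≤ l.length → (l.take (2 * k)).countP p < t) : l.countP p ≤ t := by
  have hlt := h (l.length / 2) (Nat.mul_div_le _ _)
  have hle := countP_take_add_le p l (2 * (l.length / 2)) 1
  rw [List.take_of_length_le (by omega)] at hle
  omega

theorem countP_le_of_forall_isInfix_not_isGood (hf : ∀ a, -1 ≤ f a)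
    (hp : ∀ a, f a ≠ 0 → p a) (w : List α) (hw : ∀ l, l <:+: w → ¬ IsGood f p t l) :
    (w.countP p : ℤ) ≤ (t + 1) * (w.map f).sum + t * (t + 2) := by
  induction hlen : w.length using Nat.strong_induction_on generalizing w with
  | _ n ih =>
  by_cases hsplit : ∃ k, 2 * k ≤ w.length ∧ t ≤ (w.take (2 * k)).countP p
  · obtain ⟨k, hkw, hkt⟩ := hsplit
    obtain ⟨j, hjk, hjt, hjt'⟩ := exists_le_countP_take_two_mul_le_succ w k hkt
    set a := w.take (2 * j)
    set b := w.drop (2 * j)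
    have ha_len : a.length = 2 * j := by simp only [a, List.length_take]; omega
    have ha_pos : 0 < (a.map f).sum := by
      by_contra! hle
      exact hw a (List.take_prefix _ _).isInfix ⟨by rw [ha_len]; exact even_two_mul j, hle, hjt⟩
    have hj : 0 < j := Nat.pos_of_ne_zero (by rintro rfl; simp [a] at ha_pos)
    have hb := ih b.length (by simp only [b, List.length_drop]; omega) b
      (fun l hl => hw l (hl.trans (List.drop_suffix _ _).isInfix)) rfl
    have hsplit_w : w = a ++ b := (List.take_append_drop _ _).symm
    rw [hsplit_w, List.countP_append, List.map_append, List.sum_append]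
    push_cast
    nlinarith
  · push Not at hsplit
    have hcount := countP_le_of_forall_take_two_mul_lt w hsplit
    have hsum := neg_countP_le_sum_map hf hp w
    have : (w.countP p : ℤ) ≤ t := by exact_mod_cast hcount
    nlinarith

theorem exists_isInfix_isGood (hf : ∀ a, -1 ≤ f a) (hp : ∀ a, f a ≠ 0 → p a)
    {w : List α} {x : ℤ} (hsum : (w.map f).sum ≤ x)
    (hcount : (t + 1) * x + t * (t + 2) < w.countP p) :
    ∃ l, l <:+: w ∧ IsGood f p t l := by
  by_contra! hw
  have := countP_le_of_forall_isInfix_not_isGood hf hp w hw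
  nlinarith

end GoodSegments

theorem stmt_8_general (G : SimpleGraph V) (c : Sym2 V → Bool) (M : Finset (Sym2 V))
    {u v : V} (P : G.Walk u v)
    (t x : ℕ) (ht : 2 ≤ t)
    (hw : |(P.edges.map (wt c M)).sum| ≤ (x : ℤ))
    (hred : 8 * t ^ 2 + 4 * t * x ≤ P.edges.countP (fun e => c e)) :
    ∃ l : List (Sym2 V), l <:+: P.edges ∧ Even l.length ∧
      (l.map (wt c M)).sum ≤ 0 ∧ t ≤ l.countP (fun e => c e) := by
  have hwt_ge : ∀ e, -1 ≤ wt c M e := fun e => by unfold wt; split_ifs <;> norm_num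
  have hwt_red : ∀ e, wt c M e ≠ 0 → c e := fun e => by unfold wt; split_ifs <;> simp_all
  refine exists_isInfix_isGood hwt_ge hwt_red (abs_le.mp hw).2 ?_
  have hred' : ((8 * t ^ 2 + 4 * t * x : ℕ) : ℤ) ≤ P.edges.countP (fun e => c e) := by
    exact_mod_cast hred
  push_cast at hred'
  nlinarith

/-- an `M`-alternating path with `|w_M(P)| ≤ x` and at least
`8t² + 4tx` red edges contains a `t`-good contiguous subpath. -/
theorem stmt_8 (G : SimpleGraph V) (c : Sym2 V → Bool) (M : Finset (Sym2 V))
    (hM : IsPM G M) {u v : V} (P : G.Walk u v) (hP : P.IsPath) (halt : IsAlt M P)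
    (t x : ℕ) (ht : 2 ≤ t)
    (hw : |(P.edges.map (wt c M)).sum| ≤ (x : ℤ))
    (hred : 8 * t ^ 2 + 4 * t * x ≤ P.edges.countP (fun e => c e)) :
    ∃ l : List (Sym2 V), l <:+: P.edges ∧ Even l.length ∧
      (l.map (wt c M)).sum ≤ 0 ∧ t ≤ l.countP (fun e => c e) :=
  stmt_8_general G c M P t x ht hw hred
end

section
/- Let G be a chain graph. Then every cycle C in G of length at least 8 has two adjacent odd chords. -/
variable {V : Type*} [Fintype V] [DecidableEq V]

/-- The `i`-th vertex (cyclically, indices mod `C.length`) along a closed walk `C`. -/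
def cvtx {G : SimpleGraph V} {v : V} (C : G.Walk v v) (i : ℕ) : V :=
  C.support.tail.getD (i % C.length) v

/-- Positions `i, j` on the cycle `C` carry a chord: the corresponding vertices are
adjacent in `G` but the edge is not an edge of `C`. -/
def IsChordAt {G : SimpleGraph V} {v : V} (C : G.Walk v v) (i j : ℕ) : Prop :=
  G.Adj (cvtx C i) (cvtx C j) ∧ s(cvtx C i, cvtx C j) ∉ C.edges

/-- `C` has an odd chord: a chord splitting `C` into two odd-length paths. -/
def HasOddChord {G : SimpleGraph V} {v : V} (C : G.Walk v v) : Prop :=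
  ∃ i j : ℕ, i < j ∧ j < C.length ∧ Odd (j - i) ∧ IsChordAt C i j

/-- `C` has two adjacent odd chords: chords `{u,v₀} = {cvtx i, cvtx (i+d)}` and
`{x,y} = {cvtx (i+d+1), cvtx (i+n-1)}` whose endpoints appear in cyclic order
`u, v₀, x, y` with `{v₀,x}` and `{y,u}` edges of `C`, both chords odd. -/
def HasTwoAdjOddChords {G : SimpleGraph V} {v : V} (C : G.Walk v v) : Prop :=
  ∃ i d : ℕ, 1 ≤ d ∧ d + 3 ≤ C.length ∧
    IsChordAt C i (i + d) ∧ (Odd d ∨ Odd (C.length - d)) ∧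
    IsChordAt C (i + d + 1) (i + C.length - 1) ∧
    (Odd (C.length - d - 2) ∨ Odd (d + 2))

/-- `G` is a chain graph: bipartite with the neighborhoods on each side totally
ordered by inclusion. -/
def IsChainGraph (G : SimpleGraph V) : Prop :=
  ∃ A : Set V,
    (∀ u w : V, G.Adj u w → ((u ∈ A) ↔ w ∉ A)) ∧
    (∀ u w : V, u ∈ A → w ∈ A →
      (G.neighborSet u ⊆ G.neighborSet w ∨ G.neighborSet w ⊆ G.neighborSet u)) ∧
    (∀ u w : V, u ∉ A → w ∉ A →
      (G.neighborSet u ⊆ G.neighborSet w ∨ G.neighborSet w ⊆ G.neighborSet u))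

/-!
Number the vertices of `C` cyclically. Consecutive vertices lie on opposite sides of the
bipartition, so positions of equal parity lie on the same side and have nested neighbourhoods.
If `N(a) ⊆ N(a + g)` and `N(a + 1) ⊆ N(a + g + 1)` for an even `g` with `4 ≤ g ≤ |C| - 4`,
then the two inclusions turn the cycle edge `{a, a + 1}` into the chords `{a + 1, a + g}` and `{a + g + 1, a}`,
which are adjacent and odd. Such a pair of positions is found around a position `K` whose
neighbourhood is largest among the positions of its parity, by comparing the neighbourhoods
of `K ± 1` with those of `K ∓ 3`, and of `K + 2` with that of `K - 2`.
-/

namespace SimpleGraph.Walk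

variable {α : Type*} {G : SimpleGraph α} {v : α}

lemma getVert_mod_length_of_le (C : G.Walk v v) {k : ℕ} (hk : k ≤ C.length) :
    C.getVert (k % C.length) = C.getVert k := by
  rcases hk.lt_or_eq with hk | rfl
  · rw [Nat.mod_eq_of_lt hk]
  · rw [Nat.mod_self, getVert_zero, getVert_length]

lemma adj_getVert_mod_length (C : G.Walk v v) (hn : 0 < C.length) (k : ℕ) :
    G.Adj (C.getVert (k % C.length)) (C.getVert ((k + 1) % C.length)) := by
  rw [← Nat.mod_add_mod, getVert_mod_length_of_le C (Nat.mod_lt k hn)]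
  exact C.adj_getVert_succ (Nat.mod_lt k hn)

end SimpleGraph.Walk

section CycleVertices

open SimpleGraph Walk

variable {α : Type*} {G : SimpleGraph α} {v : α} {C : G.Walk v v}

lemma cvtx_eq_getVert_mod_add_one (C : G.Walk v v) (i : ℕ) :
    cvtx C i = C.getVert (i % C.length + 1) := by
  rw [getVert_eq_getD_support, ← cons_tail_support, List.getD_cons_succ, cvtx]

lemma cvtx_eq_getVert_add_one_mod (hn : 0 < C.length) (i : ℕ) :
    cvtx C i = C.getVert ((i + 1) % C.length) := by
  rw [← Nat.mod_add_mod, getVert_mod_length_of_le C (Nat.mod_lt i hn),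
    cvtx_eq_getVert_mod_add_one]

lemma cvtx_mod_length (C : G.Walk v v) (i : ℕ) : cvtx C (i % C.length) = cvtx C i := by
  simp only [cvtx, Nat.mod_mod]

lemma cvtx_add_length (C : G.Walk v v) (i : ℕ) : cvtx C (i + C.length) = cvtx C i := by
  simp only [cvtx, Nat.add_mod_right]

lemma cvtx_adj (hn : 0 < C.length) (i : ℕ) : G.Adj (cvtx C i) (cvtx C (i + 1)) := by
  rw [cvtx_eq_getVert_add_one_mod hn, cvtx_eq_getVert_add_one_mod hn]
  exact adj_getVert_mod_length C hn (i + 1)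

lemma cvtx_eq_cvtx_iff (hC : C.IsCycle) {i j : ℕ} :
    cvtx C i = cvtx C j ↔ i % C.length = j % C.length := by
  have hn : 0 < C.length := by have := hC.three_le_length; omega
  refine ⟨fun h => ?_, fun h => by simp only [cvtx, h]⟩
  rw [cvtx_eq_getVert_mod_add_one, cvtx_eq_getVert_mod_add_one] at h
  have hi := Nat.mod_lt i hn
  have hj := Nat.mod_lt j hn
  have := hC.getVert_injOn (by simp only [Set.mem_ofPred_eq]; omega)
    (by simp only [Set.mem_ofPred_eq]; omega) h
  omega

lemma exists_eq_mk_cvtx_of_mem_edges (hn : 0 < C.length) {e : Sym2 α} (he : e ∈ C.edges) :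
    ∃ m, e = s(cvtx C m, cvtx C (m + 1)) := by
  obtain ⟨k, hk, rfl⟩ := List.getElem_of_mem he
  rw [length_edges] at hk
  refine ⟨k + C.length - 1, ?_⟩
  rw [getElem_edges, cvtx_eq_getVert_add_one_mod hn, cvtx_eq_getVert_add_one_mod hn,
    show k + C.length - 1 + 1 = k + C.length by omega, Nat.add_mod_right, Nat.mod_eq_of_lt hk,
    show k + C.length + 1 = k + 1 + C.length by omega, Nat.add_mod_right,
    getVert_mod_length_of_le C hk]

lemma mk_cvtx_add_notMem_edges (hC : C.IsCycle) (a : ℕ) {g : ℕ} (hg : 2 ≤ g)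
    (hgn : g + 2 ≤ C.length) : s(cvtx C a, cvtx C (a + g)) ∉ C.edges := by
  intro he
  obtain ⟨m, hm⟩ := exists_eq_mk_cvtx_of_mem_edges (by omega) he
  simp only [Sym2.eq_iff, cvtx_eq_cvtx_iff hC] at hm
  rcases hm with ⟨ha, hag⟩ | ⟨ha, hag⟩
  · have h : a + g ≡ a + 1 [MOD C.length] := hag.trans (Nat.ModEq.add_right 1 ha.symm)
    have h := Nat.ModEq.add_left_cancel' a h
    rw [Nat.ModEq, Nat.mod_eq_of_lt (by omega), Nat.mod_eq_of_lt (by omega)] at h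
    omega
  · have h : a + (g + 1) ≡ a + 0 [MOD C.length] := (Nat.ModEq.add_right 1 hag).trans ha.symm
    have h := Nat.ModEq.add_left_cancel' a h
    rw [Nat.ModEq, Nat.mod_eq_of_lt (by omega), Nat.zero_mod] at h
    omega

lemma isChordAt_add (hC : C.IsCycle) (a : ℕ) {g : ℕ} (hg : 2 ≤ g) (hgn : g + 2 ≤ C.length)
    (hadj : G.Adj (cvtx C a) (cvtx C (a + g))) : IsChordAt C a (a + g) :=
  ⟨hadj, mk_cvtx_add_notMem_edges hC a hg hgn⟩

lemma hasTwoAdjOddChords_of_neighborSet_subset (hC : C.IsCycle) {a g : ℕ} (hg : 4 ≤ g)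
    (hgn : g + 4 ≤ C.length) (hge : Even g)
    (h₀ : G.neighborSet (cvtx C a) ⊆ G.neighborSet (cvtx C (a + g)))
    (h₁ : G.neighborSet (cvtx C (a + 1)) ⊆ G.neighborSet (cvtx C (a + g + 1))) :
    HasTwoAdjOddChords C := by
  have hn : 0 < C.length := by omega
  obtain ⟨r, rfl⟩ := hge
  refine ⟨a + 1, r + r - 1, by omega, by omega, ?_, Or.inl ⟨r - 1, by omega⟩, ?_,
    Or.inr ⟨r, by omega⟩⟩
  · refine isChordAt_add hC _ (by omega) (by omega) ?_
    rw [show a + 1 + (r + r - 1) = a + (r + r) by omega]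
    exact (h₀ (cvtx_adj hn a)).symm
  · rw [show a + 1 + (r + r - 1) + 1 = a + (r + r) + 1 by omega,
      show a + 1 + C.length - 1 = a + (r + r) + 1 + (C.length - (r + r) - 1) by omega]
    refine isChordAt_add hC _ (by omega) (by omega) ?_
    rw [show a + (r + r) + 1 + (C.length - (r + r) - 1) = a + C.length by omega,
      cvtx_add_length]
    exact h₁ (cvtx_adj hn a).symm

lemma hasTwoAdjOddChords_of_forall_subset_neighborSet (hC : C.IsCycle) (hlen : 8 ≤ C.length)
    (heven : Even C.length)
    (htot : ∀ i j, i % 2 = j % 2 → G.neighborSet (cvtx C i) ⊆ G.neighborSet (cvtx C j) ∨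
      G.neighborSet (cvtx C j) ⊆ G.neighborSet (cvtx C i))
    {K : ℕ} (hK : 4 ≤ K)
    (hmax : ∀ j, j % 2 = K % 2 → G.neighborSet (cvtx C j) ⊆ G.neighborSet (cvtx C K)) :
    HasTwoAdjOddChords C := by
  obtain ⟨m, hm⟩ := heven
  have hsub : Even (C.length - 4) := ⟨m - 2, by omega⟩
  rcases htot (K - 3) (K + 1) (by omega) with h | hK₁
  · refine hasTwoAdjOddChords_of_neighborSet_subset hC (a := K - 4) le_rfl (by omega) ⟨2, rfl⟩
      ?_ ?_
    · rw [show K - 4 + 4 = K by omega]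
      exact hmax _ (by omega)
    · rwa [show K - 4 + 1 = K - 3 by omega, show K - 4 + 4 + 1 = K + 1 by omega]
  rcases htot (K + 3) (K - 1) (by omega) with h | hK₂
  · refine hasTwoAdjOddChords_of_neighborSet_subset hC (a := K + 3) (by omega) (by omega) hsub
      ?_ ?_
    · rwa [show K + 3 + (C.length - 4) = K - 1 + C.length by omega, cvtx_add_length]
    · rw [show K + 3 + (C.length - 4) + 1 = K + C.length by omega, cvtx_add_length]
      exact hmax _ (by omega)
  rcases htot (K + 2) (K - 2) (by omega) with h | h
  · refine hasTwoAdjOddChords_of_neighborSet_subset hC (a := K + 1) (by omega) (by omega) hsub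
      ?_ ?_
    · rwa [show K + 1 + (C.length - 4) = K - 3 + C.length by omega, cvtx_add_length]
    · rwa [show K + 1 + 1 = K + 2 by omega,
        show K + 1 + (C.length - 4) + 1 = K - 2 + C.length by omega, cvtx_add_length]
  · refine hasTwoAdjOddChords_of_neighborSet_subset hC (a := K - 2) le_rfl (by omega) ⟨2, rfl⟩
      ?_ ?_
    · rwa [show K - 2 + 4 = K + 2 by omega]
    · rwa [show K - 2 + 1 = K - 1 by omega, show K - 2 + 4 + 1 = K + 3 by omega]

end CycleVertices

section Bipartition

variable {α : Type*} {G : SimpleGraph α} {v : α} {C : G.Walk v v}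

lemma cvtx_mem_iff_even {A : Set α} (hA : ∀ u w, G.Adj u w → (u ∈ A ↔ w ∉ A))
    (hn : 0 < C.length) (i : ℕ) : cvtx C i ∈ A ↔ (cvtx C 0 ∈ A ↔ Even i) := by
  induction i with
  | zero => simp
  | succ i ih =>
    have := hA _ _ (cvtx_adj hn i)
    rw [Nat.even_add_one]
    tauto

lemma IsChainGraph.even_length (hG : IsChainGraph G) (hn : 0 < C.length) : Even C.length := by
  obtain ⟨A, hA, -⟩ := hG
  have h := cvtx_mem_iff_even hA hn C.length
  rw [show cvtx C C.length = cvtx C 0 by simpa using cvtx_add_length C 0] at h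
  tauto

lemma IsChainGraph.neighborSet_cvtx_total (hG : IsChainGraph G) (hn : 0 < C.length) (i j : ℕ)
    (hij : i % 2 = j % 2) :
    G.neighborSet (cvtx C i) ⊆ G.neighborSet (cvtx C j) ∨
      G.neighborSet (cvtx C j) ⊆ G.neighborSet (cvtx C i) := by
  obtain ⟨A, hA, hX, hY⟩ := hG
  have hside : cvtx C i ∈ A ↔ cvtx C j ∈ A := by
    have hi := cvtx_mem_iff_even hA hn i
    have hj := cvtx_mem_iff_even hA hn j
    have : Even i ↔ Even j := by simp only [Nat.even_iff, hij]
    tauto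
  by_cases hi : cvtx C i ∈ A
  · exact hX _ _ hi (hside.mp hi)
  · exact hY _ _ hi (mt hside.mpr hi)

end Bipartition

lemma Finset.exists_forall_subset_of_total {ι α : Type*} [Finite α] {s : Finset ι}
    (hs : s.Nonempty) (f : ι → Set α) (htot : ∀ i ∈ s, ∀ j ∈ s, f i ⊆ f j ∨ f j ⊆ f i) :
    ∃ k ∈ s, ∀ j ∈ s, f j ⊆ f k := by
  obtain ⟨k, hk, hmax⟩ := s.exists_max_image (fun i => (f i).ncard) hs
  refine ⟨k, hk, fun j hj => ?_⟩
  rcases htot j hj k hk with h | h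
  · exact h
  · exact (Set.eq_of_subset_of_ncard_le h (hmax j hj)).ge

/-- in a chain graph, every cycle of length at least 8 has two
adjacent odd chords. -/
theorem stmt_12 (G : SimpleGraph V) (hchain : IsChainGraph G)
    (v : V) (C : G.Walk v v) (hC : C.IsCycle) (hlen : 8 ≤ C.length) :
    HasTwoAdjOddChords C := by
  have hn : 0 < C.length := by omega
  have heven : Even C.length := hchain.even_length hn
  have htot := hchain.neighborSet_cvtx_total hn
  obtain ⟨k, hk, hkmax⟩ := Finset.exists_forall_subset_of_total
    (s := (Finset.range C.length).filter (fun j => j % 2 = 1))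
    ⟨1, Finset.mem_filter.mpr ⟨Finset.mem_range.mpr (by omega), rfl⟩⟩
    (fun j => G.neighborSet (cvtx C j))
    (fun i hi j hj => htot i j (by simp only [Finset.mem_filter] at hi hj; omega))
  simp only [Finset.mem_filter, Finset.mem_range] at hk hkmax
  refine hasTwoAdjOddChords_of_forall_subset_neighborSet hC hlen heven htot
    (K := k + C.length) (by omega) fun j hj => ?_
  have hj2 : j % C.length % 2 = j % 2 := Nat.mod_mod_of_dvd j heven.two_dvd
  have hn2 : C.length % 2 = 0 := Nat.even_iff.mp heven
  rw [cvtx_add_length, ← cvtx_mod_length]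
  exact hkmax _ ⟨Nat.mod_lt j hn, by omega⟩
end

section
/- Let G be a unit interval graph. Then every cycle C of even length at least 8 in G contains two adjacent odd chords. -/
variable {V : Type*} [Fintype V] [DecidableEq V]

/-!
Put `z i = I (cvtx C i)`, the position on the line of the `i`-th vertex of the cycle: `z` has
period `n = C.length`, consecutive values differ by at most `1`, and positions at cyclic
distance at least `2` carry a chord exactly when their values differ by at most `1`.

For even `e` with `4 ≤ e ≤ n - 4` the chords `{j, j + e + 1}` and `{j + 1, j + e}` are adjacent
and odd, and the step bound forces both of them as soon as `z (j + e) ≤ z j` and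
`z (j + 1) ≤ z (j + e + 1)`. So if there are no adjacent odd chords, `z (j + e) ≤ z j` implies
`z (j + e + 1) < z (j + 1)`. Starting from a maximum `j` of `z` on one parity class, this descent
propagates to `j + r` for every `r ≥ 1`; at `j + 1` with `e = n - 4` and at `j + n - 3` with
`e = 4` it gives `z (j + n - 2) < z (j + 2) < z (j + n - 2)`.
-/

open Function

theorem Function.Periodic.exists_forall_le_nat {α : Type*} [LinearOrder α] {f : ℕ → α} {n : ℕ}
    (hf : Periodic f n) (hn : 0 < n) : ∃ j, ∀ i, f i ≤ f j := by
  obtain ⟨j, -, hj⟩ := (Finset.range n).exists_max_image f ⟨0, Finset.mem_range.2 hn⟩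
  exact ⟨j, fun i => hf.map_mod_nat i ▸ hj _ (Finset.mem_range.2 (Nat.mod_lt i hn))⟩

theorem Function.Periodic.exists_forall_even_add_le {α : Type*} [LinearOrder α] {f : ℕ → α}
    {n : ℕ} (hf : Periodic f n) (hn : 0 < n) : ∃ j, ∀ e, Even e → f (j + e) ≤ f j := by
  have hf2 : Periodic (fun k => f (2 * k)) n := fun k => by
    simpa only [mul_add, Nat.cast_ofNat] using hf.nat_mul 2 (2 * k)
  obtain ⟨j, hj⟩ := hf2.exists_forall_le_nat hn
  refine ⟨2 * j, fun e ⟨b, hb⟩ => ?_⟩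
  simpa [hb, ← two_mul, mul_add] using hj (j + b)

/-- For `z i = I (cvtx C i)` and `n = C.length`, the two inequalities say that the positions
`p, p + d` and `p + d + 1, p + n - 1` carry two adjacent odd chords. -/
def HasAdjCloseOddPairs (z : ℕ → ℝ) (n : ℕ) : Prop :=
  ∃ p d, Odd d ∧ 3 ≤ d ∧ d + 5 ≤ n ∧
    |z p - z (p + d)| ≤ 1 ∧ |z (p + n - 1) - z (p + d + 1)| ≤ 1

variable {z : ℕ → ℝ} {n : ℕ}

theorem lt_of_le_of_not_hasAdjCloseOddPairs (hz : Periodic z n) (hn : Even n)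
    (hstep : ∀ i, |z (i + 1) - z i| ≤ 1) (hno : ¬ HasAdjCloseOddPairs z n) {j e : ℕ}
    (he : Even e) (he4 : 4 ≤ e) (hen : e + 4 ≤ n) (hle : z (j + e) ≤ z j) :
    z (j + e + 1) < z (j + 1) := by
  by_contra! hge
  have hd : Odd (n - e - 1) := by
    obtain ⟨a, rfl⟩ := hn; obtain ⟨b, rfl⟩ := he; exact ⟨a - b - 1, by omega⟩
  have h₀ := abs_le.1 (hstep j)
  have hₑ := abs_le.1 (hstep (j + e))
  refine hno ⟨j + e + 1, n - e - 1, hd, by omega, by omega, ?_, ?_⟩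
  · rw [show j + e + 1 + (n - e - 1) = j + n by omega, hz, abs_le]
    constructor <;> linarith
  · rw [show j + e + 1 + n - 1 = j + e + n by omega,
      show j + e + 1 + (n - e - 1) + 1 = j + 1 + n by omega, hz, hz, abs_le]
    constructor <;> linarith

theorem lt_of_forall_even_le_of_not_hasAdjCloseOddPairs (hz : Periodic z n) (hn : Even n)
    (hstep : ∀ i, |z (i + 1) - z i| ≤ 1) (hno : ¬ HasAdjCloseOddPairs z n) {j e : ℕ}
    (hj : ∀ e, Even e → z (j + e) ≤ z j) (he : Even e) (he4 : 4 ≤ e) (hen : e + 4 ≤ n)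
    (r : ℕ) : z (j + r + e + 1) < z (j + r + 1) := by
  induction r with
  | zero => exact lt_of_le_of_not_hasAdjCloseOddPairs hz hn hstep hno he he4 hen (hj e he)
  | succ r ih =>
    refine lt_of_le_of_not_hasAdjCloseOddPairs hz hn hstep hno he he4 hen ?_
    rw [show j + (r + 1) + e = j + r + e + 1 by omega]
    exact ih.le

theorem HasAdjCloseOddPairs.of_periodic (hz : Periodic z n) (hn : Even n) (hn8 : 8 ≤ n)
    (hstep : ∀ i, |z (i + 1) - z i| ≤ 1) : HasAdjCloseOddPairs z n := by
  by_contra hno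
  obtain ⟨j, hj⟩ := hz.exists_forall_even_add_le (by omega)
  have hn4 : Even (n - 4) := by obtain ⟨a, rfl⟩ := hn; exact ⟨a - 2, by omega⟩
  have h₁ := lt_of_forall_even_le_of_not_hasAdjCloseOddPairs hz hn hstep hno hj hn4
    (by omega) (by omega) 1
  have h₂ := lt_of_forall_even_le_of_not_hasAdjCloseOddPairs hz hn hstep hno hj (e := 4)
    ⟨2, rfl⟩ le_rfl (by omega) (n - 3)
  rw [show j + 1 + (n - 4) + 1 = j + (n - 3) + 1 by omega] at h₁
  rw [show j + (n - 3) + 4 + 1 = j + 1 + 1 + n by omega, hz] at h₂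
  linarith

namespace SimpleGraph.Walk

variable {W : Type*} {G : SimpleGraph W} {v : W} {C : G.Walk v v}

theorem periodic_cvtx (C : G.Walk v v) : Function.Periodic (cvtx C) C.length := fun k => by
  simp only [cvtx, Nat.add_mod_right]

theorem cvtx_eq_of_modEq {a b : ℕ} (h : a ≡ b [MOD C.length]) : cvtx C a = cvtx C b := by
  unfold cvtx; rw [h]

theorem cvtx_eq_getVert (C : G.Walk v v) (k : ℕ) : cvtx C k = C.getVert (k % C.length + 1) := by
  rw [getVert_eq_getD_support, ← C.cons_tail_support, List.getD_cons_succ]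
  rfl

theorem IsCycle.cvtx_eq_cvtx_iff (hC : C.IsCycle) {a b : ℕ} :
    cvtx C a = cvtx C b ↔ a ≡ b [MOD C.length] := by
  have hlen : C.support.tail.length = C.length := by simp
  have hpos : 0 < C.length := by linarith [hC.three_le_length]
  have ha : a % C.length < C.support.tail.length := by rw [hlen]; exact Nat.mod_lt _ hpos
  have hb : b % C.length < C.support.tail.length := by rw [hlen]; exact Nat.mod_lt _ hpos
  unfold cvtx
  rw [List.getD_eq_getElem _ _ ha, List.getD_eq_getElem _ _ hb]
  exact hC.support_nodup.getElem_inj_iff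

theorem getVert_eq_cvtx (hn : 0 < C.length) {i : ℕ} (hi : i ≤ C.length) :
    C.getVert i = cvtx C (i + C.length - 1) := by
  rw [cvtx_eq_getVert]
  rcases Nat.eq_zero_or_pos i with rfl | hi0
  · rw [Nat.zero_add, Nat.mod_eq_of_lt (by omega), Nat.sub_add_cancel hn, getVert_length,
      getVert_zero]
  · rw [show i + C.length - 1 = i - 1 + C.length by omega, Nat.add_mod_right,
      Nat.mod_eq_of_lt (by omega), Nat.sub_add_cancel hi0]

theorem adj_cvtx_succ (hn : 0 < C.length) (k : ℕ) : G.Adj (cvtx C k) (cvtx C (k + 1)) := by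
  set i := (k + 1) % C.length
  have hi : i < C.length := Nat.mod_lt _ hn
  have hsucc : i + C.length - 1 + 1 ≡ k + 1 [MOD C.length] := by
    rw [Nat.sub_add_cancel (by omega)]
    exact (Nat.add_modEq_right).trans (Nat.mod_modEq _ _)
  have := C.adj_getVert_succ hi
  rwa [getVert_eq_cvtx hn hi.le, getVert_eq_cvtx (i := i + 1) hn hi,
    show i + 1 + C.length - 1 = i + C.length - 1 + 1 by omega, cvtx_eq_of_modEq hsucc,
    cvtx_eq_of_modEq (Nat.ModEq.add_right_cancel' 1 hsucc)] at this

theorem exists_eq_cvtx_of_mem_edges (hn : 0 < C.length) {x y : W} (h : s(x, y) ∈ C.edges) :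
    ∃ k, s(cvtx C k, cvtx C (k + 1)) = s(x, y) := by
  obtain ⟨i, hi, he⟩ := C.mk_mem_edges_iff_exists.1 h
  refine ⟨i + C.length - 1, ?_⟩
  rwa [getVert_eq_cvtx hn hi.le, getVert_eq_cvtx (i := i + 1) hn hi,
    show i + 1 + C.length - 1 = i + C.length - 1 + 1 by omega] at he

theorem IsCycle.cvtx_ne_cvtx_add (hC : C.IsCycle) (a : ℕ) {g : ℕ} (hg : 0 < g)
    (hgn : g < C.length) : cvtx C a ≠ cvtx C (a + g) := fun h => by
  have h' : a + 0 ≡ a + g [MOD C.length] := hC.cvtx_eq_cvtx_iff.1 h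
  have := (Nat.ModEq.add_left_cancel' a h').eq_of_lt_of_lt (hg.trans hgn) hgn
  omega

theorem IsCycle.mk_cvtx_add_notMem_edges (hC : C.IsCycle) (a : ℕ) {g : ℕ} (hg : 2 ≤ g)
    (hgn : g + 2 ≤ C.length) : s(cvtx C a, cvtx C (a + g)) ∉ C.edges := fun h => by
  obtain ⟨k, hk⟩ := exists_eq_cvtx_of_mem_edges (by omega) h
  simp only [Sym2.eq_iff, hC.cvtx_eq_cvtx_iff] at hk
  rcases hk with ⟨hka, hkg⟩ | ⟨hkg, hka⟩
  · have h' : a + 1 ≡ a + g [MOD C.length] := (hka.add_right 1).symm.trans hkg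
    have := (Nat.ModEq.add_left_cancel' a h').eq_of_lt_of_lt (by omega) (by omega)
    omega
  · have h' : a + (g + 1) ≡ a + 0 [MOD C.length] := (hkg.add_right 1).symm.trans hka
    have := (Nat.ModEq.add_left_cancel' a h').eq_of_lt_of_lt (by omega) (by omega)
    omega

theorem IsCycle.isChordAt_of_abs_le (hC : C.IsCycle) {I : W → ℝ}
    (hI : ∀ u w, u ≠ w → (G.Adj u w ↔ |I u - I w| ≤ 1)) {a g : ℕ} (hg : 2 ≤ g)
    (hgn : g + 2 ≤ C.length) (h : |I (cvtx C a) - I (cvtx C (a + g))| ≤ 1) :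
    IsChordAt C a (a + g) :=
  ⟨(hI _ _ (hC.cvtx_ne_cvtx_add a (by omega) (by omega))).2 h,
    hC.mk_cvtx_add_notMem_edges a hg hgn⟩

end SimpleGraph.Walk

/-- in a unit interval graph, every even cycle of length at least 8
contains two adjacent odd chords. -/
theorem stmt_13 (G : SimpleGraph V)
    (huig : ∃ I : V → ℝ, ∀ u w : V, u ≠ w → (G.Adj u w ↔ |I u - I w| ≤ 1))
    (v : V) (C : G.Walk v v) (hC : C.IsCycle)
    (heven : Even C.length) (hlen : 8 ≤ C.length) :
    HasTwoAdjOddChords C := by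
  obtain ⟨I, hI⟩ := huig
  have hstep (k : ℕ) : |I (cvtx C (k + 1)) - I (cvtx C k)| ≤ 1 :=
    have hadj := (C.adj_cvtx_succ (by omega) k).symm
    (hI _ _ hadj.ne).1 hadj
  obtain ⟨p, d, hd, hd3, hdn, h₁, h₂⟩ :=
    HasAdjCloseOddPairs.of_periodic (C.periodic_cvtx.comp I) heven hlen hstep
  refine ⟨p, d, by omega, by omega, hC.isChordAt_of_abs_le hI (by omega) (by omega) h₁,
    Or.inl hd, ?_, Or.inr (hd.add_even even_two)⟩
  rw [show p + C.length - 1 = p + d + 1 + (C.length - d - 2) by omega] at h₂ ⊢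
  exact hC.isChordAt_of_abs_le hI (by omega) (by omega) (by rwa [abs_sub_comm])
end

section
/- For t = ⌈3 log(n)/p⌉, the Erdős–Rényi random graph G(n,p) contains no K_{t,t} in its complement with probability at least 1 - 1/n for all sufficiently large n; consequently, G(n,p) has the path-shortening property Pshort(t) with high probability. -/
variable {V : Type*} [Fintype V] [DecidableEq V]

open MeasureTheory

/-- The Bernoulli measure on `Bool` with success probability `p`. -/
noncomputable def bern (p : ℝ) : Measure Bool :=
  ENNReal.ofReal p • Measure.dirac true + ENNReal.ofReal (1 - p) • Measure.dirac false

/-- The Erdős–Rényi measure `G(n,p)`: each potential edge appears independently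
with probability `p`. A sample `ω : Sym2 (Fin n) → Bool` determines the graph
`SimpleGraph.fromEdgeSet {e | ω e = true}`. -/
noncomputable def erMeasure (n : ℕ) (p : ℝ) : Measure (Sym2 (Fin n) → Bool) :=
  Measure.pi fun _ => bern p

/-- The complement of `G` contains no `K_{t,t}`. -/
def NoBipHole {W : Type*} [DecidableEq W] (G : SimpleGraph W) (t : ℕ) : Prop :=
  ¬ ∃ A B : Finset W, Disjoint A B ∧ A.card = t ∧ B.card = t ∧
    ∀ x ∈ A, ∀ y ∈ B, ¬ G.Adj x y

/-!
Both bad events say that the complement of `G(n,p)` contains a copy of a pattern graph on the `2t`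
vertices `a₁, …, a_t, b₁, …, b_t`, and a fixed graph `H` on `k` vertices has a copy in the complement
with probability at most `n^k (1-p)^e(H) ≤ n^k e^{-p e(H)}`. For `K_{t,t}` this is
`n^{2t} e^{-pt²}`. A violation of `Pshort(t)` has no edge `a_i b_j` with `i < j`, and for every `c`
either no edge `a_i a_{c+1}` with `i < c` or no edge `b_c b_k` with `k > c + 1` (otherwise
`i < c < c + 1 < k` is a forbidden crossing). Each of the `2^t` ways of choosing these branches gives
a pattern with about `t²/2 + t²/4 = 3t²/4` edges. Since `p t ≥ 3 log n`, the exponent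
`p · 3t²/4 ≥ (9/4) t log n` beats the `n^{2t}` placements of the pattern.
-/

open MeasureTheory Finset SimpleGraph

namespace ErdosRenyi

section Sample

variable {n : ℕ} {p : ℝ}

def sampleGraph (ω : Sym2 (Fin n) → Bool) : SimpleGraph (Fin n) :=
  fromEdgeSet {e | ω e = true}

lemma compl_sampleGraph_adj {ω : Sym2 (Fin n) → Bool} {x y : Fin n} :
    (sampleGraph ω)ᶜ.Adj x y ↔ x ≠ y ∧ ω s(x, y) = false := by
  rw [compl_adj, sampleGraph, fromEdgeSet_adj, Set.mem_ofPred_eq, ← Bool.not_eq_true]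
  tauto

lemma isProbabilityMeasure_bern (h0 : 0 ≤ p) (h1 : p ≤ 1) : IsProbabilityMeasure (bern p) :=
  ⟨by simp [bern, ← ENNReal.ofReal_add h0 (sub_nonneg.2 h1)]⟩

lemma isProbabilityMeasure_erMeasure (h0 : 0 ≤ p) (h1 : p ≤ 1) :
    IsProbabilityMeasure (erMeasure n p) :=
  have := isProbabilityMeasure_bern h0 h1
  Measure.pi.instIsProbabilityMeasure _

lemma bern_singleton_false : bern p {false} = ENNReal.ofReal (1 - p) := by
  simp [bern]

lemma erMeasure_forall_eq_false (h0 : 0 ≤ p) (h1 : p ≤ 1) (F : Finset (Sym2 (Fin n))) :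
    erMeasure n p {ω | ∀ e ∈ F, ω e = false} = ENNReal.ofReal (1 - p) ^ #F := by
  have := isProbabilityMeasure_bern h0 h1
  change Measure.pi _ ((F : Set (Sym2 (Fin n))).pi fun _ => {false}) = _
  rw [Measure.pi_pi_finset, bern_singleton_false, prod_const]

lemma erMeasure_isContained_compl_le {X : Type*} [Fintype X] (H : SimpleGraph X)
    [Fintype H.edgeSet] (h0 : 0 ≤ p) (h1 : p ≤ 1) :
    erMeasure n p {ω | H ⊑ (sampleGraph ω)ᶜ} ≤
      ENNReal.ofReal ((n : ℝ) ^ Fintype.card X * (1 - p) ^ #H.edgeFinset) := by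
  classical
  have hsub : {ω | H ⊑ (sampleGraph ω)ᶜ} ⊆
      ⋃ f : X ↪ Fin n, {ω | ∀ e ∈ H.edgeFinset.map f.sym2Map, ω e = false} := by
    rintro ω ⟨φ⟩
    refine Set.mem_iUnion.2 ⟨φ.toEmbedding, ?_⟩
    simp only [Set.mem_ofPred_eq, forall_mem_map, mem_edgeFinset]
    intro e he
    induction e using Sym2.ind with
    | _ x y => exact (compl_sampleGraph_adj.1 (φ.toHom.map_adj he)).2
  calc erMeasure n p {ω | H ⊑ (sampleGraph ω)ᶜ}
      ≤ ∑ f : X ↪ Fin n, erMeasure n p {ω | ∀ e ∈ H.edgeFinset.map f.sym2Map, ω e = false} :=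
        (measure_mono hsub).trans (measure_iUnion_fintype_le _ _)
    _ = Fintype.card (X ↪ Fin n) * ENNReal.ofReal (1 - p) ^ #H.edgeFinset := by
        simp only [erMeasure_forall_eq_false h0 h1, card_map, sum_const, card_univ, nsmul_eq_mul]
    _ ≤ (n ^ Fintype.card X : ℕ) * ENNReal.ofReal (1 - p) ^ #H.edgeFinset := by
        gcongr
        rw [Fintype.card_embedding_eq, Fintype.card_fin]
        exact Nat.descFactorial_le_pow _ _
    _ = ENNReal.ofReal ((n : ℝ) ^ Fintype.card X * (1 - p) ^ #H.edgeFinset) := by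
        rw [ENNReal.ofReal_mul (by positivity), ENNReal.ofReal_pow (sub_nonneg.2 h1)]
        norm_cast

lemma erMeasure_exists_isContained_compl_le {ι X : Type*} [Fintype X] (I : Finset ι)
    (H : ι → SimpleGraph X) [∀ i, Fintype (H i).edgeSet] {ε : ℝ}
    (hε : ∀ i ∈ I, (n : ℝ) ^ Fintype.card X * (1 - p) ^ #(H i).edgeFinset ≤ ε)
    (h0 : 0 ≤ p) (h1 : p ≤ 1) :
    erMeasure n p {ω | ∃ i ∈ I, H i ⊑ (sampleGraph ω)ᶜ} ≤ #I * ENNReal.ofReal ε := by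
  have hset : {ω | ∃ i ∈ I, H i ⊑ (sampleGraph ω)ᶜ} =
      ⋃ i ∈ I, {ω : Sym2 (Fin n) → Bool | H i ⊑ (sampleGraph ω)ᶜ} := by
    ext; simp
  rw [hset, ← nsmul_eq_mul]
  refine (measure_biUnion_finset_le _ _).trans (sum_le_card_nsmul _ _ _ fun i hi => ?_)
  exact (erMeasure_isContained_compl_le _ h0 h1).trans (ENNReal.ofReal_le_ofReal (hε i hi))

end Sample

lemma card_filter_le_card_edgeFinset_fromRel {X : Type*} [Fintype X] {r : X → X → Prop}
    [DecidableRel r] [Fintype (fromRel r).edgeSet] (hr : ∀ x y, r x y → ¬ r y x) :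
    #{xy : X × X | r xy.1 xy.2} ≤ #(fromRel r).edgeFinset := by
  refine card_le_card_of_injOn (fun xy => s(xy.1, xy.2)) (fun xy hxy => ?_) ?_
  · have hxy : r xy.1 xy.2 := (mem_filter.1 hxy).2
    rw [mem_coe, mem_edgeFinset, mem_edgeSet, fromRel_adj]
    exact ⟨fun h => hr _ _ hxy (h ▸ hxy), .inl hxy⟩
  · rintro ⟨x, y⟩ hxy ⟨x', y'⟩ hxy' h
    simp only [coe_filter, mem_univ, true_and, Set.mem_ofPred_eq] at hxy hxy'
    rcases Sym2.eq_iff.1 h with ⟨rfl, rfl⟩ | ⟨rfl, rfl⟩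
    · rfl
    · exact (hr _ _ hxy hxy').elim

lemma card_edgeFinset_completeBipartiteGraph {α β : Type*} [Fintype α] [Fintype β]
    [Fintype (completeBipartiteGraph α β).edgeSet] :
    #(completeBipartiteGraph α β).edgeFinset = Fintype.card α * Fintype.card β := by
  have h := encard_edgeSet_completeBipartiteGraph (W₁ := α) (W₂ := β)
  rw [← coe_edgeFinset, Set.encard_coe_eq_coe_finsetCard, ENat.card_eq_coe_fintype_card,
    ENat.card_eq_coe_fintype_card] at h
  exact_mod_cast h

lemma sum_range_min_sub_add_two (m : ℕ) :
    ∑ c ∈ range (m + 2 + 1), min c (m + 2 - c) = ∑ c ∈ range (m + 1), min c (m - c) + (m + 1) := by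
  rw [sum_range_succ, sum_range_succ']
  have hshift : ∀ c ∈ range (m + 1), min (c + 1) (m + 2 - (c + 1)) = min c (m - c) + 1 := by
    intro c hc
    rw [mem_range] at hc
    omega
  rw [sum_congr rfl hshift, sum_add_distrib, sum_const, card_range]
  simp

lemma sq_le_four_mul_sum_min : ∀ m : ℕ, m ^ 2 ≤ 4 * ∑ c ∈ range (m + 1), min c (m - c) + 1
  | 0 => by simp
  | 1 => by decide
  | m + 2 => by
    have ih := sq_le_four_mul_sum_min m
    rw [sum_range_min_sub_add_two]
    nlinarith

lemma sum_fin_boole {t : ℕ} (P : ℕ → Prop) [DecidablePred P] :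
    ∑ j : Fin t, (if P j then 1 else 0) = #{j ∈ range t | P j} := by
  rw [Fin.sum_univ_eq_sum_range (fun j => if P j then 1 else 0), sum_boole, Nat.cast_id]

lemma card_filter_range_lt (t i : ℕ) : #{j ∈ range t | i < j} = t - 1 - i := by
  rw [show {j ∈ range t | i < j} = Ioo i t by ext; simp; omega, Nat.card_Ioo]
  omega

lemma card_filter_range_add_one_lt {t i : ℕ} (hi : i ≤ t) :
    #{j ∈ range t | j + 1 < i} = i - 1 := by
  rw [show {j ∈ range t | j + 1 < i} = range (i - 1) by ext; simp; omega, card_range]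

/-- The non-edges forced by a violation of `Pshort t`, with `a_i = inl i` and `b_i = inr i`:
all `a_i b_j` with `i < j`, and for each `c` either all `a_{c+1} a_i` with `i < c` (if `c ∈ σ`) or
all `b_c b_k` with `k > c + 1` (if `c ∉ σ`). Each edge is listed once, oriented away from the centre
of its star. -/
def shortPatternRel (t : ℕ) (σ : Finset ℕ) : Fin t ⊕ Fin t → Fin t ⊕ Fin t → Prop
  | .inl i, .inr j => (i : ℕ) < j
  | .inl i, .inl j => (i : ℕ) - 1 ∈ σ ∧ (j : ℕ) + 1 < i
  | .inr i, .inr j => (i : ℕ) ∉ σ ∧ (i : ℕ) + 1 < j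
  | .inr _, .inl _ => False

section ShortPattern

variable {t : ℕ} {σ : Finset ℕ} {i j : Fin t}

@[simp] lemma shortPatternRel_inl_inr : shortPatternRel t σ (.inl i) (.inr j) ↔ (i : ℕ) < j :=
  .rfl

@[simp] lemma shortPatternRel_inl_inl :
    shortPatternRel t σ (.inl i) (.inl j) ↔ (i : ℕ) - 1 ∈ σ ∧ (j : ℕ) + 1 < i :=
  .rfl

@[simp] lemma shortPatternRel_inr_inr :
    shortPatternRel t σ (.inr i) (.inr j) ↔ (i : ℕ) ∉ σ ∧ (i : ℕ) + 1 < j :=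
  .rfl

@[simp] lemma not_shortPatternRel_inr_inl : ¬ shortPatternRel t σ (.inr i) (.inl j) :=
  id

lemma shortPatternRel_asymm : ∀ x y, shortPatternRel t σ x y → ¬ shortPatternRel t σ y x := by
  rintro (x | x) (y | y) <;> simp <;> omega

abbrev shortPattern (t : ℕ) (σ : Finset ℕ) : SimpleGraph (Fin t ⊕ Fin t) :=
  fromRel (shortPatternRel t σ)

lemma sum_fin_ite_add_one_lt (i : Fin t) :
    ∑ j : Fin t, (if (j : ℕ) + 1 < i then 1 else 0) = (i : ℕ) - 1 := by
  rw [sum_fin_boole (· + 1 < (i : ℕ)), card_filter_range_add_one_lt i.2.le]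

lemma card_filter_shortPatternRel [DecidableRel (shortPatternRel t σ)] :
    #{xy : (Fin t ⊕ Fin t) × (Fin t ⊕ Fin t) | shortPatternRel t σ xy.1 xy.2} =
      ∑ i ∈ range t, (t - 1 - i) + ∑ i ∈ range t, (if i - 1 ∈ σ then i - 1 else 0) +
        ∑ i ∈ range t, (if i ∈ σ then 0 else t - 1 - (i + 1)) := by
  rw [card_filter, Fintype.sum_prod_type]
  simp only [Fintype.sum_sum_type, shortPatternRel_inl_inr, shortPatternRel_inl_inl,
    shortPatternRel_inr_inr, not_shortPatternRel_inr_inl, if_false, sum_const_zero, ite_and,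
    sum_ite_irrel, sum_fin_boole, ite_not, card_filter_range_lt,
    sum_fin_ite_add_one_lt, add_zero, sum_add_distrib]
  rw [Fin.sum_univ_eq_sum_range (fun i => if i - 1 ∈ σ then i - 1 else 0),
    Fin.sum_univ_eq_sum_range (fun i => t - 1 - i),
    Fin.sum_univ_eq_sum_range (fun i => if i ∈ σ then 0 else t - 1 - (i + 1))]
  ring

lemma three_mul_sq_le_card_filter_shortPatternRel [DecidableRel (shortPatternRel t σ)] :
    3 * t ^ 2 ≤
      4 * #{xy : (Fin t ⊕ Fin t) × (Fin t ⊕ Fin t) | shortPatternRel t σ xy.1 xy.2} + 6 * t := by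
  rw [card_filter_shortPatternRel]
  obtain ht | ⟨k, rfl⟩ : t < 2 ∨ ∃ k, t = k + 2 :=
    (lt_or_ge t 2).imp_right fun h => ⟨t - 2, by omega⟩
  · interval_cases t <;> simp
  have hfwd : (∑ i ∈ range (k + 2), (k + 2 - 1 - i)) * 2 = (k + 2) * (k + 1) := by
    rw [sum_range_reflect (fun i => i) (k + 2), sum_range_id_mul_two]
    rfl
  have hbranch : ∑ c ∈ range (k + 1), min c (k - c) ≤
      ∑ i ∈ range (k + 2), (if i - 1 ∈ σ then i - 1 else 0) +
        ∑ i ∈ range (k + 2), (if i ∈ σ then 0 else k + 2 - 1 - (i + 1)) := by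
    rw [sum_range_succ' _ (k + 1), sum_range_succ _ (k + 1)]
    simp only [Nat.add_sub_cancel]
    calc ∑ c ∈ range (k + 1), min c (k - c)
        ≤ ∑ c ∈ range (k + 1), ((if c ∈ σ then c else 0) +
            (if c ∈ σ then 0 else k + 2 - 1 - (c + 1))) :=
          sum_le_sum fun c _ => by split_ifs <;> omega
      _ ≤ _ := by
          rw [sum_add_distrib]
          omega
  have := sq_le_four_mul_sum_min k
  nlinarith

lemma three_mul_sq_le_card_edgeFinset_shortPattern [Fintype (shortPattern t σ).edgeSet] :
    3 * t ^ 2 ≤ 4 * #(shortPattern t σ).edgeFinset + 6 * t := by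
  classical
  refine (three_mul_sq_le_card_filter_shortPatternRel (σ := σ)).trans ?_
  gcongr
  exact card_filter_le_card_edgeFinset_fromRel shortPatternRel_asymm

end ShortPattern

lemma completeBipartiteGraph_isContained_compl {W : Type*} [DecidableEq W] {G : SimpleGraph W}
    {t : ℕ} (h : ¬ NoBipHole G t) : completeBipartiteGraph (Fin t) (Fin t) ⊑ Gᶜ := by
  obtain ⟨A, B, hAB, hA, hB, hnadj⟩ := not_not.1 h
  refine completeBipartiteGraph_isContained_iff.2 ⟨A, B, by simpa, by simpa, fun x hx y hy => ?_⟩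
  exact (compl_adj G x y).2 ⟨fun hxy => disjoint_left.1 hAB hx (hxy ▸ hy), hnadj x hx y hy⟩

lemma injective_sumElim_of_nodup_flatMap {α : Type*} {t : ℕ} {a b : Fin t → α}
    (h : ((List.finRange t).flatMap fun i => [a i, b i]).Nodup) :
    Function.Injective (Sum.elim a b) := by
  have hmap : ((List.finRange t).flatMap fun i => [Sum.inl i, Sum.inr i]).map (Sum.elim a b) =
      (List.finRange t).flatMap fun i => [a i, b i] := by
    simp [List.map_flatMap]
  rw [← hmap] at h
  intro x y hxy
  exact List.inj_on_of_nodup_map h (by cases x <;> simp) (by cases y <;> simp) hxy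

lemma exists_shortPattern_isContained_compl {V : Type*} [Fintype V] [DecidableEq V]
    {G : SimpleGraph V} {t : ℕ} (h : ¬ Pshort G t) :
    ∃ σ ∈ (range t).powerset, shortPattern t σ ⊑ Gᶜ := by
  classical
  simp only [Pshort] at h
  push Not at h
  obtain ⟨M, -, u, v, P, hP, -, a, b, -, hsub, hab, hcross⟩ := h
  let σ := {c ∈ range t | ∀ i j : Fin t, (i : ℕ) < c → (j : ℕ) = c + 1 → ¬ G.Adj (a i) (a j)}
  have hinj := injective_sumElim_of_nodup_flatMap (hsub.nodup hP.support_nodup)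
  have key : ∀ x y, shortPatternRel t σ x y → ¬ G.Adj (Sum.elim a b x) (Sum.elim a b y) := by
    rintro (i | i) (j | j) hr
    · obtain ⟨hi, hji⟩ := hr
      exact fun hadj => (mem_filter.1 hi).2 j i (by omega) (by omega) hadj.symm
    · exact hab i j hr
    · exact hr.elim
    · obtain ⟨hi, hij⟩ := hr
      simp only [σ, mem_filter, mem_range, i.2, true_and, not_forall, not_not] at hi
      obtain ⟨i₁, j₁, hi₁, hj₁, hadj⟩ := hi
      exact hcross i₁ i j₁ j hi₁ (Fin.lt_def.2 (by omega)) (Fin.lt_def.2 (by omega)) hadj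
  refine ⟨σ, mem_powerset.2 (filter_subset _ _),
    isContained_iff_exists_le_comap.2 ⟨⟨_, hinj⟩, fun x y hxy => ?_⟩⟩
  obtain ⟨hne, hr | hr⟩ := (fromRel_adj _ _ _).1 hxy
  · exact (compl_adj _ _ _).2 ⟨hinj.ne hne, key x y hr⟩
  · exact (compl_adj _ _ _).2 ⟨hinj.ne hne, fun hadj => key y x hr hadj.symm⟩

lemma pow_mul_one_sub_pow_le {n t K : ℕ} {p : ℝ} (hn : 0 < n) (hp0 : 0 < p) (hp1 : p ≤ 1)
    (hL : 100 ≤ Real.log n) (hpt : 3 * Real.log n ≤ p * t) (hK : 3 * t ^ 2 ≤ 4 * K + 6 * t) :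
    (n : ℝ) ^ (t + t) * (1 - p) ^ K ≤ 1 / (2 ^ t * (2 * n)) := by
  have hnR : (0 : ℝ) < n := Nat.cast_pos.2 hn
  set L := Real.log n
  have htL : 3 * L ≤ t := hpt.trans (mul_le_of_le_one_left (Nat.cast_nonneg t) hp1)
  have hKp : 9 * t * L - 6 * t ≤ 4 * (K * p) := by
    have hK' : 3 * (t : ℝ) ^ 2 ≤ 4 * K + 6 * t := by exact_mod_cast hK
    nlinarith [mul_le_mul_of_nonneg_left hpt (Nat.cast_nonneg (α := ℝ) t)]
  have hexp : (t + t) * L - K * p ≤ -(t + 1) - L := by nlinarith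
  have he : (2 : ℝ) ≤ Real.exp 1 := by linarith [Real.add_one_le_exp 1]
  calc (n : ℝ) ^ (t + t) * (1 - p) ^ K
      ≤ Real.exp L ^ (t + t) * Real.exp (-p) ^ K := by
        rw [Real.exp_log hnR]
        gcongr
        exact Real.one_sub_le_exp_neg p
    _ = Real.exp ((t + t) * L - K * p) := by
        rw [← Real.exp_nat_mul, ← Real.exp_nat_mul, ← Real.exp_add]
        push_cast
        ring_nf
    _ ≤ Real.exp (-(t + 1) - L) := Real.exp_le_exp.2 hexp
    _ = 1 / (Real.exp 1 ^ (t + 1) * Real.exp L) := by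
        rw [← Real.exp_nat_mul, ← Real.exp_add, one_div, ← Real.exp_neg]
        push_cast
        ring_nf
    _ ≤ 1 / (2 ^ t * (2 * n)) := by
        rw [Real.exp_log hnR]
        apply one_div_le_one_div_of_le (by positivity)
        calc (2 : ℝ) ^ t * (2 * n) = 2 ^ (t + 1) * n := by ring
          _ ≤ Real.exp 1 ^ (t + 1) * n := by gcongr

lemma erMeasure_not_noBipHole_le {n t : ℕ} {p : ℝ} (hn : 0 < n) (hp0 : 0 < p) (hp1 : p ≤ 1)
    (hL : 100 ≤ Real.log n) (hpt : 3 * Real.log n ≤ p * t) :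
    erMeasure n p {ω | ¬ NoBipHole (sampleGraph ω) t} ≤ ENNReal.ofReal (1 / (2 * n)) := by
  classical
  refine (measure_mono fun ω => completeBipartiteGraph_isContained_compl).trans
    ((erMeasure_isContained_compl_le _ hp0.le hp1).trans (ENNReal.ofReal_le_ofReal ?_))
  rw [Fintype.card_sum, card_edgeFinset_completeBipartiteGraph, Fintype.card_fin]
  refine (pow_mul_one_sub_pow_le hn hp0 hp1 hL hpt (by nlinarith)).trans ?_
  exact one_div_le_one_div_of_le (by positivity)
    (le_mul_of_one_le_left (by positivity) (one_le_pow₀ (by norm_num)))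

lemma erMeasure_not_pshort_le {n t : ℕ} {p : ℝ} (hn : 0 < n) (hp0 : 0 < p) (hp1 : p ≤ 1)
    (hL : 100 ≤ Real.log n) (hpt : 3 * Real.log n ≤ p * t) :
    erMeasure n p {ω | ¬ Pshort (sampleGraph ω) t} ≤ ENNReal.ofReal (1 / (2 * n)) := by
  classical
  refine (measure_mono fun ω => exists_shortPattern_isContained_compl).trans
    ((erMeasure_exists_isContained_compl_le _ _ (ε := 1 / (2 ^ t * (2 * n))) (fun σ _ => ?_)
      hp0.le hp1).trans_eq ?_)
  · rw [Fintype.card_sum, Fintype.card_fin]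
    exact pow_mul_one_sub_pow_le hn hp0 hp1 hL hpt three_mul_sq_le_card_edgeFinset_shortPattern
  · rw [card_powerset, card_range, ← ENNReal.ofReal_natCast, ← ENNReal.ofReal_mul (by positivity)]
    congr 1
    push_cast
    field_simp

lemma ofReal_one_sub_le_erMeasure_noBipHole_and_pshort {n t : ℕ} {p : ℝ} (hp0 : 0 < p)
    (hp1 : p ≤ 1) (hL : 100 ≤ Real.log n) (hpt : 3 * Real.log n ≤ p * t) :
    ENNReal.ofReal (1 - 1 / n) ≤
      erMeasure n p {ω | NoBipHole (sampleGraph ω) t ∧ Pshort (sampleGraph ω) t} := by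
  have := isProbabilityMeasure_erMeasure (n := n) hp0.le hp1
  have hn : 0 < n := Nat.pos_of_ne_zero fun h => by norm_num [h] at hL
  set T := {ω | NoBipHole (sampleGraph ω) t ∧ Pshort (sampleGraph ω) t}
  have hbad : erMeasure n p Tᶜ ≤ ENNReal.ofReal (1 / n) :=
    calc erMeasure n p Tᶜ
        ≤ erMeasure n p ({ω | ¬ NoBipHole (sampleGraph ω) t} ∪ {ω | ¬ Pshort (sampleGraph ω) t}) :=
          measure_mono fun ω hω => not_and_or.1 hω
      _ ≤ ENNReal.ofReal (1 / (2 * n)) + ENNReal.ofReal (1 / (2 * n)) :=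
          (measure_union_le _ _).trans <| add_le_add
            (erMeasure_not_noBipHole_le hn hp0 hp1 hL hpt) (erMeasure_not_pshort_le hn hp0 hp1 hL hpt)
      _ = ENNReal.ofReal (1 / n) := by
          rw [← ENNReal.ofReal_add (by positivity) (by positivity)]
          congr 1
          ring
  calc ENNReal.ofReal (1 - 1 / n) = 1 - ENNReal.ofReal (1 / n) := by
        rw [ENNReal.ofReal_sub _ (by positivity), ENNReal.ofReal_one]
    _ ≤ 1 - erMeasure n p Tᶜ := tsub_le_tsub_left hbad 1
    _ = erMeasure n p T := by
        rw [prob_compl_eq_one_sub (Set.toFinite _).measurableSet,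
          ENNReal.sub_sub_cancel ENNReal.one_ne_top prob_le_one]

end ErdosRenyi

/-- with `t = ⌈3 log n / p⌉`, for all sufficiently large `n` the
random graph `G(n,p)` contains no `K_{t,t}` in its complement — and hence has the
path-shortening property `Pshort(t)` — with probability at least `1 - 1/n`. -/
theorem stmt_19 (p : ℕ → ℝ) (hp : ∀ n, 0 < p n ∧ p n < 1) :
    ∀ᶠ n : ℕ in Filter.atTop,
      ENNReal.ofReal (1 - 1 / (n : ℝ)) ≤
        erMeasure n (p n)
          {ω : Sym2 (Fin n) → Bool |
            NoBipHole (SimpleGraph.fromEdgeSet {e | ω e = true}) ⌈3 * Real.log n / p n⌉₊ ∧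
            Pshort (SimpleGraph.fromEdgeSet {e | ω e = true}) ⌈3 * Real.log n / p n⌉₊} := by
  filter_upwards [(Real.tendsto_log_atTop.comp tendsto_natCast_atTop_atTop).eventually_ge_atTop 100]
    with n hn
  refine ErdosRenyi.ofReal_one_sub_le_erMeasure_noBipHole_and_pshort (hp n).1 (hp n).2.le hn ?_
  have hceil := Nat.le_ceil (3 * Real.log n / p n)
  rw [div_le_iff₀ (hp n).1] at hceil
  linarith
end
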